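/- arXiv:1602.02361 — 9 statements merged into one kernel-verified Lean document; each statement's English description precedes it below -/
import Mathlib

section
/- Let q be a prime power, let G be a non-empty subset of the algebraic closure of F_q invariant under the Frobenius map σ : α ↦ α^q, and let ⋄ : G × G → G be a diamond product, i.e., σ(α ⋄ β) = σ(α) ⋄ σ(β) for all α, β ∈ G. Let m, n be positive integers with 𝓕_m(q) ∪ 𝓕_n(q) ⊆ G, and suppose ⋄ satisfies weak cancellation on 𝓕_m(q) × 𝓕_n(q). If f, g ∈ F_q[x] are monic polynomials of degrees m and n with all roots in G such that f and g are irreducible over F_q and gcd(m,n) = 1, then the composed product f ⋄ g is irreducible in F_q[x]. -/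
/-! The `q`-Frobenius `σ` permutes the algebraic closure of `𝔽_q`, and an element lies in
`𝓕_k(q)` exactly when its `σ`-orbit has length `k`, which for an algebraic element is the degree
of its minimal polynomial (the Frobenius of `𝔽_q(α)` has order `[𝔽_q(α) : 𝔽_q]`).
Let `α`, `β` be roots of `f`, `g`, with orbit lengths `m`, `n`. Since `⋄` commutes with `σ`,
`σ^{mn}` fixes `α ⋄ β`. Conversely, if `σ^l` fixes `α ⋄ β` then so does `σ^{lm}`, which fixes `α`,
so `α ⋄ σ^{lm} β = α ⋄ β` and weak cancellation gives `σ^{lm} β = β`; thus `n ∣ lm`, hence `n ∣ l`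
as `m` and `n` are coprime, and symmetrically `m ∣ l`. So `α ⋄ β` has degree `mn` over `𝔽_q`,
and `f ⋄ g`, monic of degree `mn` and vanishing at `α ⋄ β`, is its minimal polynomial. -/

open Polynomial IntermediateField Function

/-- `Fcal q m` is the set `𝓕_m(q)` of elements of (an extension of) `𝔽_q` that
generate `𝔽_{q^m}` over `𝔽_q`: elements fixed by the `m`-th power of the `q`-Frobenius
and such that every power of the Frobenius fixing them is a multiple of `m`. -/
def Fcal (q m : ℕ) {K : Type*} [Monoid K] : Set K :=
  {α | α ^ q ^ m = α ∧ ∀ l : ℕ, 0 < l → α ^ q ^ l = α → m ∣ l}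

section Periodic

variable {X : Type*} {σ : X → X} {G : Set X} {d : X → X → X}

theorem iterate_map₂_of_semiconj (hσG : Set.MapsTo σ G G)
    (hd : ∀ a ∈ G, ∀ b ∈ G, σ (d a b) = d (σ a) (σ b)) {a b : X} (ha : a ∈ G) (hb : b ∈ G)
    (l : ℕ) : σ^[l] (d a b) = d (σ^[l] a) (σ^[l] b) := by
  induction l with
  | zero => rfl
  | succ l ih =>
    rw [iterate_succ_apply', iterate_succ_apply', iterate_succ_apply', ih,
      hd _ (hσG.iterate l ha) _ (hσG.iterate l hb)]

theorem minimalPeriod_dvd_of_isPeriodicPt_map₂ (hσG : Set.MapsTo σ G G)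
    (hd : ∀ a ∈ G, ∀ b ∈ G, σ (d a b) = d (σ a) (σ b)) {a b : X} (ha : a ∈ G) (hb : b ∈ G)
    {m : ℕ} (hm : IsPeriodicPt σ m a) (hcop : (minimalPeriod σ b).Coprime m)
    (hcancel : ∀ l, d a (σ^[l] b) = d a b → σ^[l] b = b)
    {l : ℕ} (hl : IsPeriodicPt σ l (d a b)) : minimalPeriod σ b ∣ l := by
  refine hcop.dvd_of_dvd_mul_right (IsPeriodicPt.minimalPeriod_dvd (hcancel _ ?_))
  calc d a (σ^[l * m] b) = d (σ^[l * m] a) (σ^[l * m] b) := by rw [(hm.const_mul l).eq]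
    _ = σ^[l * m] (d a b) := (iterate_map₂_of_semiconj hσG hd ha hb _).symm
    _ = d a b := (hl.mul_const m).eq

theorem minimalPeriod_map₂_eq_mul (hσG : Set.MapsTo σ G G)
    (hd : ∀ a ∈ G, ∀ b ∈ G, σ (d a b) = d (σ a) (σ b)) {a b : X} (ha : a ∈ G) (hb : b ∈ G)
    (hcop : (minimalPeriod σ a).Coprime (minimalPeriod σ b))
    (hcancel_left : ∀ l, d (σ^[l] a) b = d a b → σ^[l] a = a)
    (hcancel_right : ∀ l, d a (σ^[l] b) = d a b → σ^[l] b = b) :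
    minimalPeriod σ (d a b) = minimalPeriod σ a * minimalPeriod σ b := by
  refine Nat.dvd_antisymm (IsPeriodicPt.minimalPeriod_dvd ?_) (hcop.mul_dvd_of_dvd_of_dvd ?_ ?_)
  · rw [IsPeriodicPt, IsFixedPt, iterate_map₂_of_semiconj hσG hd ha hb,
      ((isPeriodicPt_minimalPeriod σ a).mul_const _).eq,
      ((isPeriodicPt_minimalPeriod σ b).const_mul _).eq]
  · exact minimalPeriod_dvd_of_isPeriodicPt_map₂ (d := flip d) hσG (fun a ha b hb => hd b hb a ha)
      hb ha (isPeriodicPt_minimalPeriod σ b) hcop hcancel_left (isPeriodicPt_minimalPeriod σ _)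
  · exact minimalPeriod_dvd_of_isPeriodicPt_map₂ hσG hd ha hb
      (isPeriodicPt_minimalPeriod σ a) hcop.symm hcancel_right (isPeriodicPt_minimalPeriod σ _)

end Periodic

section Fcal

variable {M : Type*} [Monoid M] {q : ℕ}

theorem isPeriodicPt_pow_iff {l : ℕ} {α : M} : IsPeriodicPt (· ^ q) l α ↔ α ^ q ^ l = α := by
  rw [IsPeriodicPt, IsFixedPt, pow_iterate]

theorem Fcal_eq_setOf_minimalPeriod (m : ℕ) :
    (Fcal q m : Set M) = {α | minimalPeriod (· ^ q) α = m} := by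
  ext α
  simp only [Fcal, Set.mem_ofPred_eq, ← isPeriodicPt_pow_iff]
  constructor
  · rintro ⟨hm, hmin⟩
    have hdvd := hm.minimalPeriod_dvd
    rcases (minimalPeriod (· ^ q) α).eq_zero_or_pos with h0 | hpos
    · rw [h0, zero_dvd_iff] at hdvd
      rw [h0, hdvd]
    · exact Nat.dvd_antisymm hdvd (hmin _ hpos (isPeriodicPt_minimalPeriod _ _))
  · rintro rfl
    exact ⟨isPeriodicPt_minimalPeriod _ _, fun l _ hl => hl.minimalPeriod_dvd⟩

theorem iterate_mem_Fcal {m : ℕ} (hm : 0 < m) {α : M} (hα : α ∈ (Fcal q m : Set M)) (l : ℕ) :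
    (· ^ q)^[l] α ∈ (Fcal q m : Set M) := by
  rw [Fcal_eq_setOf_minimalPeriod] at hα ⊢
  have hper := minimalPeriod_pos_iff_mem_periodicPts.mp (hα ▸ hm)
  exact (minimalPeriod_apply_iterate hper l).trans hα

end Fcal

section FiniteField

variable {F K : Type*} [Field F] [Fintype F] [Field K] [Algebra F K]

theorem pow_card_pow_eq_self_iff {α : K} (hα : IsIntegral F α) (l : ℕ) :
    α ^ Fintype.card F ^ l = α ↔ (minpoly F α).natDegree ∣ l := by
  have := adjoin.finiteDimensional hα
  have : Finite F⟮α⟯ := Module.finite_of_finite F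
  rw [← adjoin.finrank hα, ← FiniteField.orderOf_frobeniusAlgHom F F⟮α⟯,
    orderOf_dvd_iff_pow_eq_one]
  constructor
  · intro h
    refine algHom_ext_of_eq_adjoin F rfl ?_
    rintro x rfl
    ext
    simp [FiniteField.coe_frobeniusAlgHom, pow_iterate, h]
  · intro h
    simpa [FiniteField.coe_frobeniusAlgHom, pow_iterate] using
      congrArg Subtype.val (DFunLike.congr_fun h (AdjoinSimple.gen F α))

theorem minimalPeriod_pow_card {α : K} (hα : IsIntegral F α) :
    minimalPeriod (· ^ Fintype.card F) α = (minpoly F α).natDegree :=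
  Nat.dvd_right_iff_eq.mp fun l => by
    rw [← isPeriodicPt_iff_minimalPeriod_dvd, isPeriodicPt_pow_iff, pow_card_pow_eq_self_iff hα]

theorem minimalPeriod_pow_card_of_mem_aroots {f : F[X]} (hfi : Irreducible f) (hfm : f.Monic)
    {α : K} (hα : α ∈ f.aroots K) : minimalPeriod (· ^ Fintype.card F) α = f.natDegree := by
  have hα' := (mem_aroots.mp hα).2
  rw [minimalPeriod_pow_card ⟨f, hfm, hα'⟩, ← minpoly.eq_of_irreducible_of_monic hfi hα' hfm]

end FiniteField

theorem eq_minpoly_of_map_eq_prod_X_sub_C {F K : Type*} [Field F] [Field K] [Algebra F K]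
    {h : F[X]} {s : Multiset K} (hh : h.map (algebraMap F K) = (s.map (X - C ·)).prod)
    {x : K} (hx : x ∈ s) (hdeg : (minpoly F x).natDegree = Multiset.card s) :
    h = minpoly F x := by
  have hmonic : h.Monic := monic_of_injective (algebraMap F K).injective
    (hh ▸ monic_multiset_prod_of_monic _ _ fun y _ => monic_X_sub_C y)
  have hroot : aeval x h = 0 := by
    rw [aeval_def, ← eval_map, hh, eval_multiset_prod]
    exact Multiset.prod_eq_zero
      (Multiset.mem_map.2 ⟨X - C x, Multiset.mem_map_of_mem _ hx, by simp⟩)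
  refine minpoly.unique_of_degree_le_degree_minpoly F x hmonic hroot ?_
  rw [degree_eq_natDegree hmonic.ne_zero,
    degree_eq_natDegree (minpoly.ne_zero ⟨h, hmonic, hroot⟩), hdeg,
    ← natDegree_multiset_prod_X_sub_C_eq_card, ← hh, natDegree_map]

theorem stmt_1_general {F : Type*} [Field F] [Fintype F] (q : ℕ) (hq : Fintype.card F = q)
    (G : Set (AlgebraicClosure F))
    (hGinv : ∀ a ∈ G, a ^ q ∈ G)
    (d : AlgebraicClosure F → AlgebraicClosure F → AlgebraicClosure F)
    (hdia : ∀ a ∈ G, ∀ b ∈ G, (d a b) ^ q = d (a ^ q) (b ^ q))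
    (m n : ℕ) (hm : 0 < m) (hn : 0 < n)
    (hFmG : (Fcal q m : Set (AlgebraicClosure F)) ⊆ G)
    (hFnG : (Fcal q n : Set (AlgebraicClosure F)) ⊆ G)
    (hwc₁ : ∀ α ∈ (Fcal q m : Set (AlgebraicClosure F)),
      ∀ β ∈ (Fcal q n : Set (AlgebraicClosure F)),
      ∀ β' ∈ (Fcal q n : Set (AlgebraicClosure F)), d α β = d α β' → β = β')
    (hwc₂ : ∀ α ∈ (Fcal q m : Set (AlgebraicClosure F)),
      ∀ α' ∈ (Fcal q m : Set (AlgebraicClosure F)),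
      ∀ β ∈ (Fcal q n : Set (AlgebraicClosure F)), d α β = d α' β → α = α')
    (f g : Polynomial F) (hfm : f.Monic) (hgm : g.Monic)
    (hfd : f.natDegree = m) (hgd : g.natDegree = n)
    (hfi : Irreducible f) (hgi : Irreducible g) (hmn : Nat.Coprime m n)
    (h : Polynomial F)
    (hh : h.map (algebraMap F (AlgebraicClosure F)) =
      ((((f.map (algebraMap F (AlgebraicClosure F))).roots.bind fun α =>
          (g.map (algebraMap F (AlgebraicClosure F))).roots.map fun β => d α β).map
        fun γ => X - C γ)).prod) :
    Irreducible h := by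
  subst hq
  have hfroots : Multiset.card (f.map (algebraMap F (AlgebraicClosure F))).roots = m :=
    IsAlgClosed.card_aroots_eq_natDegree.trans hfd
  have hgroots : Multiset.card (g.map (algebraMap F (AlgebraicClosure F))).roots = n :=
    IsAlgClosed.card_aroots_eq_natDegree.trans hgd
  obtain ⟨α, hα⟩ := Multiset.card_pos_iff_exists_mem.mp (hfroots ▸ hm)
  obtain ⟨β, hβ⟩ := Multiset.card_pos_iff_exists_mem.mp (hgroots ▸ hn)
  have hαm := hfd ▸ minimalPeriod_pow_card_of_mem_aroots hfi hfm hα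
  have hβn := hgd ▸ minimalPeriod_pow_card_of_mem_aroots hgi hgm hβ
  have hαF := (Fcal_eq_setOf_minimalPeriod m).ge hαm
  have hβF := (Fcal_eq_setOf_minimalPeriod n).ge hβn
  have hγ : minimalPeriod (· ^ Fintype.card F) (d α β) = m * n := by
    rw [minimalPeriod_map₂_eq_mul hGinv hdia (hFmG hαF) (hFnG hβF) (hαm ▸ hβn ▸ hmn)
      (fun l hl => hwc₂ _ (iterate_mem_Fcal hm hαF l) α hαF β hβF hl)
      (fun l hl => hwc₁ α hαF _ (iterate_mem_Fcal hn hβF l) β hβF hl), hαm, hβn]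
  have hγint : IsIntegral F (d α β) := Algebra.IsIntegral.isIntegral _
  rw [eq_minpoly_of_map_eq_prod_X_sub_C hh
    (Multiset.mem_bind.2 ⟨α, hα, Multiset.mem_map_of_mem _ hβ⟩)
    (by simp [← minimalPeriod_pow_card hγint, hγ, Multiset.card_bind, hfroots, hgroots])]
  exact minpoly.irreducible hγint

/-- If `⋄` is a diamond product on a Frobenius-invariant set `G ⊇ 𝓕_m(q) ∪ 𝓕_n(q)`
satisfying weak cancellation on `𝓕_m(q) × 𝓕_n(q)`, and `f, g` are monic irreducible
polynomials over `𝔽_q` of coprime degrees `m, n` with all roots in `G`, then the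
composed product `f ⋄ g` is irreducible over `𝔽_q`. -/
theorem stmt_1 {F : Type*} [Field F] [Fintype F] (q : ℕ) (hq : Fintype.card F = q)
    (G : Set (AlgebraicClosure F)) (hGne : G.Nonempty)
    (hGinv : ∀ a ∈ G, a ^ q ∈ G)
    (d : AlgebraicClosure F → AlgebraicClosure F → AlgebraicClosure F)
    (hdG : ∀ a ∈ G, ∀ b ∈ G, d a b ∈ G)
    (hdia : ∀ a ∈ G, ∀ b ∈ G, (d a b) ^ q = d (a ^ q) (b ^ q))
    (m n : ℕ) (hm : 0 < m) (hn : 0 < n)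
    (hFmG : (Fcal q m : Set (AlgebraicClosure F)) ⊆ G)
    (hFnG : (Fcal q n : Set (AlgebraicClosure F)) ⊆ G)
    (hwc₁ : ∀ α ∈ (Fcal q m : Set (AlgebraicClosure F)),
      ∀ β ∈ (Fcal q n : Set (AlgebraicClosure F)),
      ∀ β' ∈ (Fcal q n : Set (AlgebraicClosure F)), d α β = d α β' → β = β')
    (hwc₂ : ∀ α ∈ (Fcal q m : Set (AlgebraicClosure F)),
      ∀ α' ∈ (Fcal q m : Set (AlgebraicClosure F)),
      ∀ β ∈ (Fcal q n : Set (AlgebraicClosure F)), d α β = d α' β → α = α')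
    (f g : Polynomial F) (hfm : f.Monic) (hgm : g.Monic)
    (hfd : f.natDegree = m) (hgd : g.natDegree = n)
    (hfG : ∀ x ∈ (f.map (algebraMap F (AlgebraicClosure F))).roots, x ∈ G)
    (hgG : ∀ x ∈ (g.map (algebraMap F (AlgebraicClosure F))).roots, x ∈ G)
    (hfi : Irreducible f) (hgi : Irreducible g) (hmn : Nat.Coprime m n)
    (h : Polynomial F)
    (hh : h.map (algebraMap F (AlgebraicClosure F)) =
      ((((f.map (algebraMap F (AlgebraicClosure F))).roots.bind fun α =>
          (g.map (algebraMap F (AlgebraicClosure F))).roots.map fun β => d α β).map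
        fun γ => X - C γ)).prod) :
    Irreducible h :=
  stmt_1_general q hq G hGinv d hdia m n hm hn hFmG hFnG hwc₁ hwc₂ f g hfm hgm hfd hgd hfi hgi hmn h
    hh
end

section
/- (Brawley–Carlitz) Let q be a prime power, let G be a non-empty subset of the algebraic closure of F_q invariant under the Frobenius map σ : α ↦ α^q, and let ⋄ : G × G → G be a diamond product, i.e., σ(α ⋄ β) = σ(α) ⋄ σ(β) for all α, β ∈ G. Suppose that (G, ⋄) is a group. Let f, g ∈ F_q[x] be monic polynomials of degrees m and n respectively, with all roots in G. Then the composed product f ⋄ g is irreducible in F_q[x] if and only if f and g are both irreducible over F_q and gcd(m,n) = 1. -/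
open Polynomial

section Helpers
open IntermediateField
variable {F : Type*} [Field F] [Fintype F]

private lemma pow_frob_add {R : Type*} [Monoid R] (x : R) (q a b : ℕ) :
    x ^ q ^ (a + b) = (x ^ q ^ a) ^ q ^ b := by rw [pow_add, pow_mul]

private lemma pow_frob_fixed_mul {R : Type*} [Monoid R] (x : R) (q a : ℕ)
    (hx : x ^ q ^ a = x) : ∀ k, x ^ q ^ (a * k) = x
  | 0 => by simp
  | (k + 1) => by
      rw [Nat.mul_succ, pow_frob_add, pow_frob_fixed_mul x q a hx k, hx]

private lemma pow_frob_minpoly (q : ℕ) (hq : Fintype.card F = q) (x : AlgebraicClosure F) :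
    x ^ q ^ (minpoly F x).natDegree = x := by
  have hint : IsIntegral F x := (Algebra.IsAlgebraic.isAlgebraic x).isIntegral
  haveI : FiniteDimensional F F⟮x⟯ := IntermediateField.adjoin.finiteDimensional hint
  haveI : Finite F⟮x⟯ := Module.finite_of_finite F
  haveI : Fintype F⟮x⟯ := Fintype.ofFinite _
  have hcard : Fintype.card F⟮x⟯ = q ^ (minpoly F x).natDegree := by
    rw [Module.card_eq_pow_finrank (K := F), hq, IntermediateField.adjoin.finrank hint]
  have h1 := FiniteField.pow_card (IntermediateField.AdjoinSimple.gen F x)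
  rw [hcard] at h1
  have h2 := congrArg (algebraMap F⟮x⟯ (AlgebraicClosure F)) h1
  rwa [map_pow, IntermediateField.AdjoinSimple.algebraMap_gen] at h2

private lemma exists_frob' (q : ℕ) (hq : Fintype.card F = q) (k : ℕ) :
    ∃ ψ : AlgebraicClosure F →+* AlgebraicClosure F, ∀ y, ψ y = y ^ q ^ k := by
  set p := ringChar F with hp
  haveI : CharP F p := ringChar.charP F
  have hprime : p.Prime := CharP.char_is_prime F p
  haveI := Fact.mk hprime
  obtain ⟨s, -, hcard⟩ := FiniteField.card F p
  refine ⟨iterateFrobenius (AlgebraicClosure F) p ((s : ℕ) * k), fun y => ?_⟩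
  rw [iterateFrobenius_def, pow_mul, ← hcard, hq]

private lemma minpoly_deg_dvd_iff (q : ℕ) (hq : Fintype.card F = q)
    (x : AlgebraicClosure F) {n : ℕ} (hn : 0 < n) :
    (minpoly F x).natDegree ∣ n ↔ x ^ q ^ n = x := by
  have hint : IsIntegral F x := (Algebra.IsAlgebraic.isAlgebraic x).isIntegral
  set dd := (minpoly F x).natDegree with hdd
  have hdpos : 0 < dd := minpoly.natDegree_pos hint
  have hfix : x ^ q ^ dd = x := pow_frob_minpoly q hq x
  constructor
  · rintro ⟨k, rfl⟩
    exact pow_frob_fixed_mul x q dd hfix k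
  · intro hxn
    have key : ∀ a b : ℕ, x ^ q ^ a = x → x ^ q ^ b = x → x ^ q ^ Nat.gcd a b = x := by
      intro a b
      induction a, b using Nat.gcd.induction with
      | H0 b => intro _ h2; simpa using h2
      | H1 a b hapos ih =>
        intro h1 h2
        rw [Nat.gcd_rec]
        refine ih ?_ h1
        have hb : a * (b / a) + b % a = b := Nat.div_add_mod b a
        have h3 := pow_frob_add x q (a * (b / a)) (b % a)
        rw [hb, pow_frob_fixed_mul x q a h1 (b / a)] at h3
        rw [← h3, h2]
    have hc : x ^ q ^ Nat.gcd dd n = x := key dd n hfix hxn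
    set c := Nat.gcd dd n with hc'
    have hcpos : 0 < c := Nat.gcd_pos_of_pos_left n hdpos
    have hq2 : 1 < q := hq ▸ Fintype.one_lt_card
    -- every element of F⟮x⟯ is fixed by the c-th power of Frobenius
    obtain ⟨ψ, hψ⟩ := exists_frob' q hq c
    have hall : ∀ y ∈ F⟮x⟯, y ^ q ^ c = y := by
      intro y hy
      induction hy using IntermediateField.adjoin_induction with
      | mem z hz => rw [Set.mem_singleton_iff.mp hz]; exact hc
      | algebraMap r =>
          rw [← map_pow]
          congr 1
          rw [← hq]
          exact FiniteField.pow_card_pow c r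
      | add a b _ _ ha hb => rw [← hψ, map_add, hψ, hψ, ha, hb]
      | inv a _ ha => rw [inv_pow, ha]
      | mul a b _ _ ha hb => rw [mul_pow, ha, hb]
    -- counting
    haveI : FiniteDimensional F F⟮x⟯ := IntermediateField.adjoin.finiteDimensional hint
    haveI : Finite F⟮x⟯ := Module.finite_of_finite F
    haveI : Fintype F⟮x⟯ := Fintype.ofFinite _
    classical
    have hne : (X ^ q ^ c - X : (AlgebraicClosure F)[X]) ≠ 0 :=
      FiniteField.X_pow_card_pow_sub_X_ne_zero _ hcpos.ne' hq2
    have hdeg : (X ^ q ^ c - X : (AlgebraicClosure F)[X]).natDegree = q ^ c :=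
      FiniteField.X_pow_card_pow_sub_X_natDegree_eq _ hcpos.ne' hq2
    have hcardle : Fintype.card F⟮x⟯ ≤ q ^ c := by
      calc Fintype.card F⟮x⟯
          = (Finset.univ.image fun y : F⟮x⟯ => (y : AlgebraicClosure F)).card := by
            rw [Finset.card_image_of_injective _ Subtype.coe_injective, Finset.card_univ]
        _ ≤ (X ^ q ^ c - X : (AlgebraicClosure F)[X]).roots.toFinset.card := by
            apply Finset.card_le_card
            intro z hz
            simp only [Finset.mem_image] at hz
            obtain ⟨y, -, rfl⟩ := hz
            rw [Multiset.mem_toFinset, mem_roots hne]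
            simp only [IsRoot, eval_sub, eval_pow, eval_X, sub_eq_zero]
            exact hall (y : AlgebraicClosure F) y.2
        _ ≤ Multiset.card ((X ^ q ^ c - X : (AlgebraicClosure F)[X]).roots) :=
            Multiset.toFinset_card_le _
        _ ≤ (X ^ q ^ c - X : (AlgebraicClosure F)[X]).natDegree :=
            Polynomial.card_roots' _
        _ = q ^ c := hdeg
    have hcard : Fintype.card F⟮x⟯ = q ^ dd := by
      rw [Module.card_eq_pow_finrank (K := F), hq, IntermediateField.adjoin.finrank hint]
    rw [hcard] at hcardle
    have hle : dd ≤ c := (Nat.pow_le_pow_iff_right hq2).mp hcardle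
    have hcd : c ∣ dd := Nat.gcd_dvd_left _ _
    have : dd = c := le_antisymm hle (Nat.le_of_dvd hdpos hcd)
    rw [this]
    exact Nat.gcd_dvd_right _ _

private lemma root_pow_frob (q : ℕ) (hq : Fintype.card F = q) (f : F[X]) (k : ℕ)
    {α : AlgebraicClosure F}
    (hα : (f.map (algebraMap F (AlgebraicClosure F))).eval α = 0) :
    (f.map (algebraMap F (AlgebraicClosure F))).eval (α ^ q ^ k) = 0 := by
  obtain ⟨ψ, hψ⟩ := exists_frob' q hq k
  have hcomp : ψ.comp (algebraMap F (AlgebraicClosure F)) = algebraMap F (AlgebraicClosure F) := by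
    ext r
    rw [RingHom.comp_apply, hψ, ← map_pow]
    congr 1
    rw [← hq]
    exact FiniteField.pow_card_pow k r
  calc (f.map (algebraMap F (AlgebraicClosure F))).eval (α ^ q ^ k)
      = ((f.map (algebraMap F (AlgebraicClosure F))).map ψ).eval (ψ α) := by
        rw [Polynomial.map_map, hcomp, hψ]
    _ = ψ ((f.map (algebraMap F (AlgebraicClosure F))).eval α) := by
        rw [Polynomial.eval_map, Polynomial.eval₂_at_apply]
    _ = 0 := by rw [hα, map_zero]

end Helpers

/-- **Brawley–Carlitz.** Let `⋄` be a diamond product on a Frobenius-invariant set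
`G ⊆ 𝔽̄_q` such that `(G, ⋄)` is a group, and let `f, g` be monic polynomials over
`𝔽_q` of degrees `m, n` with all roots in `G`. Then the composed product `f ⋄ g` is
irreducible over `𝔽_q` iff `f` and `g` are irreducible and `gcd(m, n) = 1`. -/
theorem stmt_3 {F : Type*} [Field F] [Fintype F] (q : ℕ) (hq : Fintype.card F = q)
    (G : Set (AlgebraicClosure F)) (hGne : G.Nonempty)
    (hGinv : ∀ a ∈ G, a ^ q ∈ G)
    (d : AlgebraicClosure F → AlgebraicClosure F → AlgebraicClosure F)
    (hdG : ∀ a ∈ G, ∀ b ∈ G, d a b ∈ G)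
    (hdia : ∀ a ∈ G, ∀ b ∈ G, (d a b) ^ q = d (a ^ q) (b ^ q))
    (e : AlgebraicClosure F) (he : e ∈ G)
    (hid : ∀ a ∈ G, d e a = a ∧ d a e = a)
    (hassoc : ∀ a ∈ G, ∀ b ∈ G, ∀ c ∈ G, d (d a b) c = d a (d b c))
    (hinv : ∀ a ∈ G, ∃ b ∈ G, d a b = e ∧ d b a = e)
    (m n : ℕ) (hm : 0 < m) (hn : 0 < n)
    (f g : Polynomial F) (hfm : f.Monic) (hgm : g.Monic)
    (hfd : f.natDegree = m) (hgd : g.natDegree = n)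
    (hfG : ∀ x ∈ (f.map (algebraMap F (AlgebraicClosure F))).roots, x ∈ G)
    (hgG : ∀ x ∈ (g.map (algebraMap F (AlgebraicClosure F))).roots, x ∈ G)
    (h : Polynomial F)
    (hh : h.map (algebraMap F (AlgebraicClosure F)) =
      ((((f.map (algebraMap F (AlgebraicClosure F))).roots.bind fun α =>
          (g.map (algebraMap F (AlgebraicClosure F))).roots.map fun β => d α β).map
        fun γ => X - C γ)).prod) :
    Irreducible h ↔ Irreducible f ∧ Irreducible g ∧ Nat.Coprime m n := by
  classical
  set φ := algebraMap F (AlgebraicClosure F) with hφ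
  have hφinj : Function.Injective φ := φ.injective
  set fb := f.map φ with hfb
  set gb := g.map φ with hgb
  set hb := h.map φ with hhb
  -- basic facts
  have hf0 : f ≠ 0 := hfm.ne_zero
  have hg0 : g ≠ 0 := hgm.ne_zero
  have hfb0 : fb ≠ 0 := (Polynomial.map_ne_zero_iff hφinj).mpr hf0
  have hgb0 : gb ≠ 0 := (Polynomial.map_ne_zero_iff hφinj).mpr hg0
  have hfbroots : Multiset.card fb.roots = m := by
    have e1 : Multiset.card fb.roots = fb.natDegree :=
      Polynomial.splits_iff_card_roots.mp (IsAlgClosed.splits fb)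
    have e2 : (f.map φ).natDegree = f.natDegree := Polynomial.natDegree_map φ
    rw [e1]; exact e2.trans hfd
  have hgbroots : Multiset.card gb.roots = n := by
    have e1 : Multiset.card gb.roots = gb.natDegree :=
      Polynomial.splits_iff_card_roots.mp (IsAlgClosed.splits gb)
    have e2 : (g.map φ).natDegree = g.natDegree := Polynomial.natDegree_map φ
    rw [e1]; exact e2.trans hgd
  set D := fb.roots.bind (fun α => gb.roots.map fun β => d α β) with hD
  have hDcard : Multiset.card D = m * n := by
    rw [hD, Multiset.card_bind]
    have e : (Multiset.map (Multiset.card ∘ fun α => Multiset.map (fun β => d α β) gb.roots)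
        fb.roots) = Multiset.map (fun _ => n) fb.roots :=
      Multiset.map_congr rfl (fun α _ => by
        simp only [Function.comp_apply, Multiset.card_map]; exact hgbroots)
    rw [e, Multiset.map_const', Multiset.sum_replicate, hfbroots, smul_eq_mul]
  have hbm : hb.Monic := by
    rw [hh]
    exact monic_multiset_prod_of_monic _ _ fun a _ => monic_X_sub_C a
  have hhm : h.Monic := Polynomial.monic_map_iff.mp hbm
  have hbroots : hb.roots = D := by
    rw [hh, roots_multiset_prod_X_sub_C]
  have hhdeg : h.natDegree = m * n := by
    have e1 : (h.map φ).natDegree = h.natDegree := Polynomial.natDegree_map φ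
    have e2 : hb.natDegree = m * n := by
      rw [hh, natDegree_multiset_prod_X_sub_C_eq_card]
      exact hDcard
    rw [← e1]; exact e2
  -- group utilities
  have cancel_right : ∀ a ∈ G, ∀ x ∈ G, ∀ y ∈ G, d x a = d y a → x = y := by
    intro a ha x hx y hy hxy
    obtain ⟨b, hbG, hab, hba⟩ := hinv a ha
    calc x = d x e := ((hid x hx).2).symm
      _ = d x (d a b) := by rw [hab]
      _ = d (d x a) b := (hassoc x hx a ha b hbG).symm
      _ = d (d y a) b := by rw [hxy]
      _ = d y (d a b) := hassoc y hy a ha b hbG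
      _ = d y e := by rw [hab]
      _ = y := (hid y hy).2
  have cancel_left : ∀ a ∈ G, ∀ x ∈ G, ∀ y ∈ G, d a x = d a y → x = y := by
    intro a ha x hx y hy hxy
    obtain ⟨b, hbG, hab, hba⟩ := hinv a ha
    calc x = d e x := ((hid x hx).1).symm
      _ = d (d b a) x := by rw [hba]
      _ = d b (d a x) := hassoc b hbG a ha x hx
      _ = d b (d a y) := by rw [hxy]
      _ = d (d b a) y := (hassoc b hbG a ha y hy).symm
      _ = d e y := by rw [hba]
      _ = y := (hid y hy).1
  have hGpow : ∀ a ∈ G, ∀ k : ℕ, a ^ q ^ k ∈ G := by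
    intro a ha k
    induction k with
    | zero => simpa using ha
    | succ k ih => rw [pow_succ, pow_mul]; exact hGinv _ ih
  have hdiapow : ∀ a ∈ G, ∀ b ∈ G, ∀ k : ℕ, (d a b) ^ q ^ k = d (a ^ q ^ k) (b ^ q ^ k) := by
    intro a ha b hb k
    induction k with
    | zero => simp
    | succ k ih =>
      rw [pow_succ, pow_mul, pow_mul, pow_mul, ih]
      exact hdia _ (hGpow a ha k) _ (hGpow b hb k)
  -- aeval of roots
  have haev : ∀ (p : F[X]) (x : AlgebraicClosure F), x ∈ (p.map φ).roots →
      (Polynomial.aeval x) p = 0 := by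
    intro p x hx
    have h1 := Polynomial.isRoot_of_mem_roots hx
    rw [Polynomial.IsRoot, Polynomial.eval_map] at h1
    rw [Polynomial.aeval_def]
    exact h1
  constructor
  · -- h irreducible → f, g irreducible and coprime degrees
    intro hirr
    have hDpos : 0 < Multiset.card D := by rw [hDcard]; exact Nat.mul_pos hm hn
    obtain ⟨γ, hγD⟩ := Multiset.card_pos_iff_exists_mem.mp hDpos
    obtain ⟨α, hα, hγ2⟩ := Multiset.mem_bind.mp hγD
    obtain ⟨β, hβ, rfl⟩ := Multiset.mem_map.mp hγ2
    have hαG := hfG α hα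
    have hβG := hgG β hβ
    have hγG := hdG α hαG β hβG
    have hintα : IsIntegral F α := (Algebra.IsAlgebraic.isAlgebraic α).isIntegral
    have hintβ : IsIntegral F β := (Algebra.IsAlgebraic.isAlgebraic β).isIntegral
    have hintγ : IsIntegral F (d α β) := (Algebra.IsAlgebraic.isAlgebraic _).isIntegral
    have hγroot : d α β ∈ hb.roots := by rw [hbroots]; exact hγD
    have hdvd : minpoly F (d α β) ∣ h := minpoly.dvd F _ (haev h _ hγroot)
    obtain ⟨u, hu⟩ := hdvd
    have huu : IsUnit u := (hirr.isUnit_or_isUnit hu).resolve_left (minpoly.not_isUnit F _)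
    have hdegγ : (minpoly F (d α β)).natDegree = m * n := by
      have e := congrArg Polynomial.natDegree hu
      rw [Polynomial.natDegree_mul (minpoly.ne_zero hintγ) huu.ne_zero,
        Polynomial.natDegree_eq_zero_of_isUnit huu, Nat.add_zero, hhdeg] at e
      exact e.symm
    set a := (minpoly F α).natDegree with ha
    set b := (minpoly F β).natDegree with hbb
    have hapos : 0 < a := minpoly.natDegree_pos hintα
    have hbpos : 0 < b := minpoly.natDegree_pos hintβ
    have hdvdf : minpoly F α ∣ f := minpoly.dvd F α (haev f α hα)
    have hdvdg : minpoly F β ∣ g := minpoly.dvd F β (haev g β hβ)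
    have ham : a ≤ m := by
      have := Polynomial.natDegree_le_of_dvd hdvdf hf0
      rwa [hfd] at this
    have hbn : b ≤ n := by
      have := Polynomial.natDegree_le_of_dvd hdvdg hg0
      rwa [hgd] at this
    have hL : 0 < Nat.lcm a b := Nat.lcm_pos hapos hbpos
    have hαfix : α ^ q ^ Nat.lcm a b = α :=
      (minpoly_deg_dvd_iff q hq α hL).mp (Nat.dvd_lcm_left a b)
    have hβfix : β ^ q ^ Nat.lcm a b = β :=
      (minpoly_deg_dvd_iff q hq β hL).mp (Nat.dvd_lcm_right a b)
    have hγfix : (d α β) ^ q ^ Nat.lcm a b = d α β := by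
      rw [hdiapow α hαG β hβG _, hαfix, hβfix]
    have hmn_dvd : m * n ∣ Nat.lcm a b := by
      have := (minpoly_deg_dvd_iff q hq (d α β) hL).mpr hγfix
      rwa [hdegγ] at this
    have hlcm_dvd : Nat.lcm a b ∣ a * b := Nat.lcm_dvd (dvd_mul_right a b) (dvd_mul_left b a)
    have hab_le : a * b ≤ m * n := Nat.mul_le_mul ham hbn
    have hmnle : m * n ≤ Nat.lcm a b := Nat.le_of_dvd hL hmn_dvd
    have hlcmle : Nat.lcm a b ≤ a * b := Nat.le_of_dvd (Nat.mul_pos hapos hbpos) hlcm_dvd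
    have habmn : a * b = m * n := le_antisymm hab_le (le_trans hmnle hlcmle)
    have ha_eq : a = m := by
      have h1 : m * n ≤ a * n := by
        calc m * n = a * b := habmn.symm
          _ ≤ a * n := Nat.mul_le_mul_left a hbn
      exact le_antisymm ham (Nat.le_of_mul_le_mul_right h1 hn)
    have hb_eq : b = n := by
      have h1 : m * n ≤ m * b := by
        calc m * n = a * b := habmn.symm
          _ ≤ m * b := Nat.mul_le_mul_right b ham
      exact le_antisymm hbn (Nat.le_of_mul_le_mul_left h1 hm)
    have hlcm_eq : Nat.lcm m n = m * n := by
      rw [← ha_eq, ← hb_eq]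
      exact le_antisymm hlcmle (habmn.le.trans hmnle)
    have hco : Nat.Coprime m n := by
      have hgl := Nat.gcd_mul_lcm m n
      rw [hlcm_eq] at hgl
      have hpos : 0 < m * n := Nat.mul_pos hm hn
      exact Nat.eq_of_mul_eq_mul_right hpos (hgl.trans (one_mul _).symm)
    have hfirr : Irreducible f := by
      have hfe : f = minpoly F α :=
        Polynomial.eq_of_monic_of_dvd_of_natDegree_le (minpoly.monic hintα) hfm hdvdf
          (by rw [hfd]; exact ha_eq.ge)
      rw [hfe]; exact minpoly.irreducible hintα
    have hgirr : Irreducible g := by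
      have hge : g = minpoly F β :=
        Polynomial.eq_of_monic_of_dvd_of_natDegree_le (minpoly.monic hintβ) hgm hdvdg
          (by rw [hgd]; exact hb_eq.ge)
      rw [hge]; exact minpoly.irreducible hintβ
    exact ⟨hfirr, hgirr, hco⟩
  · -- f, g irreducible and coprime → h irreducible
    rintro ⟨hfirr, hgirr, hco⟩
    obtain ⟨α, hα⟩ := Multiset.card_pos_iff_exists_mem.mp
      (show 0 < Multiset.card fb.roots by rw [hfbroots]; exact hm)
    obtain ⟨β, hβ⟩ := Multiset.card_pos_iff_exists_mem.mp
      (show 0 < Multiset.card gb.roots by rw [hgbroots]; exact hn)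
    have hαG := hfG α hα
    have hβG := hgG β hβ
    have hγG := hdG α hαG β hβG
    have hintα : IsIntegral F α := (Algebra.IsAlgebraic.isAlgebraic α).isIntegral
    have hintβ : IsIntegral F β := (Algebra.IsAlgebraic.isAlgebraic β).isIntegral
    have hintγ : IsIntegral F (d α β) := (Algebra.IsAlgebraic.isAlgebraic _).isIntegral
    have hminα : minpoly F α = f := (minpoly.eq_of_irreducible_of_monic hfirr (haev f α hα) hfm).symm
    have hminβ : minpoly F β = g := (minpoly.eq_of_irreducible_of_monic hgirr (haev g β hβ) hgm).symm
    have hdegα : (minpoly F α).natDegree = m := by rw [hminα, hfd]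
    have hdegβ : (minpoly F β).natDegree = n := by rw [hminβ, hgd]
    have hγroot : d α β ∈ hb.roots := by
      rw [hbroots, hD]
      exact Multiset.mem_bind.mpr ⟨α, hα, Multiset.mem_map.mpr ⟨β, hβ, rfl⟩⟩
    set t := (minpoly F (d α β)).natDegree with ht
    have htpos : 0 < t := minpoly.natDegree_pos hintγ
    have hγfix : (d α β) ^ q ^ t = d α β := (minpoly_deg_dvd_iff q hq _ htpos).mp dvd_rfl
    have hmdvd : m ∣ t := by
      have h1 : (d α β) ^ q ^ (t * n) = d α β := pow_frob_fixed_mul _ q t hγfix n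
      rw [hdiapow α hαG β hβG (t * n)] at h1
      have hβ1 : β ^ q ^ (t * n) = β := by
        refine (minpoly_deg_dvd_iff q hq β (Nat.mul_pos htpos hn)).mp ?_
        rw [hdegβ]; exact dvd_mul_left n t
      rw [hβ1] at h1
      have hαeq : α ^ q ^ (t * n) = α :=
        cancel_right β hβG _ (hGpow α hαG _) α hαG h1
      have h2 := (minpoly_deg_dvd_iff q hq α (Nat.mul_pos htpos hn)).mpr hαeq
      rw [hdegα] at h2
      exact Nat.Coprime.dvd_of_dvd_mul_right hco h2
    have hndvd : n ∣ t := by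
      have h1 : (d α β) ^ q ^ (t * m) = d α β := pow_frob_fixed_mul _ q t hγfix m
      rw [hdiapow α hαG β hβG (t * m)] at h1
      have hα1 : α ^ q ^ (t * m) = α := by
        refine (minpoly_deg_dvd_iff q hq α (Nat.mul_pos htpos hm)).mp ?_
        rw [hdegα]; exact dvd_mul_left m t
      rw [hα1] at h1
      have hβeq : β ^ q ^ (t * m) = β :=
        cancel_left α hαG _ (hGpow β hβG _) β hβG h1
      have h2 := (minpoly_deg_dvd_iff q hq β (Nat.mul_pos htpos hm)).mpr hβeq
      rw [hdegβ] at h2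
      exact Nat.Coprime.dvd_of_dvd_mul_right hco.symm h2
    have htdvdmn : t ∣ m * n := by
      refine (minpoly_deg_dvd_iff q hq _ (Nat.mul_pos hm hn)).mpr ?_
      rw [hdiapow α hαG β hβG,
        (minpoly_deg_dvd_iff q hq α (Nat.mul_pos hm hn)).mp (by rw [hdegα]; exact dvd_mul_right m n),
        (minpoly_deg_dvd_iff q hq β (Nat.mul_pos hm hn)).mp (by rw [hdegβ]; exact dvd_mul_left n m)]
    have htmn : t = m * n :=
      Nat.dvd_antisymm htdvdmn (Nat.Coprime.mul_dvd_of_dvd_of_dvd hco hmdvd hndvd)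
    have hdvd : minpoly F (d α β) ∣ h := minpoly.dvd F _ (haev h _ hγroot)
    have hhe : h = minpoly F (d α β) :=
      Polynomial.eq_of_monic_of_dvd_of_natDegree_le (minpoly.monic hintγ) hhm hdvd
        (by rw [hhdeg, ← ht]; exact htmn.ge)
    rw [hhe]; exact minpoly.irreducible hintγ
end

section
/- Let q be a prime power, let m > 1 be an integer, and let m₁ be the smallest prime divisor of m. If ψ(x) ∈ F_q[x] is a monic polynomial with 0 < deg ψ < m₁, then for every α ∈ 𝓕_m(q) one has ψ(α) ∈ 𝓕_m(q); equivalently, the polynomial function defined by ψ satisfies restricted injectivity on 𝓕_m(q). -/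
open Polynomial

section Aux
variable {F K : Type*} [Field F] [Field K] [Algebra F K]

lemma fix_pow (τ : K ≃ₐ[F] K) (x : K) (h : τ x = x) : ∀ n : ℕ, (τ ^ n) x = x := by
  intro n
  induction n with
  | zero => simp
  | succ n ih => rw [pow_succ, AlgEquiv.mul_apply, h, ih]

lemma fix_zpow (τ : K ≃ₐ[F] K) (x : K) (h : τ x = x) : ∀ n : ℤ, (τ ^ n) x = x := by
  intro n
  cases n with
  | ofNat n => simpa using fix_pow τ x h n
  | negSucc n =>
      have h1 : (τ ^ ((n : ℤ) + 1)) x = x := by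
        rw [show ((n : ℤ) + 1) = ((n + 1 : ℕ) : ℤ) by push_cast; ring, zpow_natCast]
        exact fix_pow τ x h (n + 1)
      have key : τ ^ ((n : ℤ) + 1) * τ ^ (Int.negSucc n) = 1 := by
        rw [← zpow_add, show ((n : ℤ) + 1) + Int.negSucc n = 0 by
          rw [Int.negSucc_eq]; ring, zpow_zero]
      apply (τ ^ ((n : ℤ) + 1)).injective
      rw [← AlgEquiv.mul_apply, key, AlgEquiv.one_apply, h1]

lemma fix_zpow_add (τ : K ≃ₐ[F] K) (x : K) (a b : ℤ) (ha : (τ ^ a) x = x)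
    (hb : (τ ^ b) x = x) : (τ ^ (a + b)) x = x := by
  rw [zpow_add, AlgEquiv.mul_apply, hb, ha]

lemma fix_zpow_mul (τ : K ≃ₐ[F] K) (x : K) (a : ℤ) (ha : (τ ^ a) x = x) (j : ℤ) :
    (τ ^ (a * j)) x = x := by
  rw [zpow_mul]
  exact fix_zpow (τ ^ a) x ha j

end Aux

/-- If `m > 1` has smallest prime divisor `m₁` and `ψ ∈ 𝔽_q[x]` is monic with
`0 < deg ψ < m₁`, then `ψ` maps `𝓕_m(q)` into `𝓕_m(q)`; equivalently, `ψ`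
satisfies restricted injectivity on `𝓕_m(q)`. -/
theorem stmt_5 {F : Type*} [Field F] [Fintype F] (q : ℕ) (hq : Fintype.card F = q)
    (σ : AlgebraicClosure F ≃ₐ[F] AlgebraicClosure F) (hσ : ∀ x, σ x = x ^ q)
    (m m₁ : ℕ) (hm : 1 < m) (hm₁ : m₁ = m.minFac)
    (ψ : Polynomial F) (hmon : ψ.Monic)
    (hdeg₀ : 0 < ψ.natDegree) (hdeg₁ : ψ.natDegree < m₁) :
    (∀ α ∈ (Fcal q m : Set (AlgebraicClosure F)),
        Polynomial.aeval α ψ ∈ (Fcal q m : Set (AlgebraicClosure F))) ∧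
    (∀ α ∈ (Fcal q m : Set (AlgebraicClosure F)), ∀ k : ℤ,
        Polynomial.aeval ((σ ^ k) α) ψ = Polynomial.aeval α ψ → (σ ^ k) α = α) := by
  set K := AlgebraicClosure F
  have hpow : ∀ (x : K) (k : ℕ), (σ ^ k) x = x ^ q ^ k := by
    intro x k
    induction k with
    | zero => simp
    | succ k ih => rw [pow_succ', AlgEquiv.mul_apply, ih, hσ, ← pow_mul, ← pow_succ]
  have hcomm : ∀ (x : K) (k : ℤ), (σ ^ k) (aeval x ψ) = aeval ((σ ^ k) x) ψ := by
    intro x k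
    exact (aeval_algHom_apply (σ ^ k) x ψ).symm
  have hcommn : ∀ (x : K) (k : ℕ), (σ ^ k) (aeval x ψ) = aeval ((σ ^ k) x) ψ := by
    intro x k
    exact (aeval_algHom_apply (σ ^ k) x ψ).symm
  have part1 : ∀ α ∈ (Fcal q m : Set K), aeval α ψ ∈ (Fcal q m : Set K) := by
    intro α hα
    obtain ⟨hα1, hα2⟩ := hα
    set β := aeval α ψ with hβ
    have hσm : (σ ^ m) α = α := by rw [hpow]; exact hα1
    have hβm : (σ ^ m) β = β := by rw [hcommn, hσm]
    constructor
    · rw [← hpow]; exact hβm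
    · intro l hl hbl
      have hβl : (σ ^ l) β = β := by rw [hpow]; exact hbl
      set d := Nat.gcd l m with hd
      have hdpos : 0 < d := Nat.gcd_pos_of_pos_left m hl
      have hddvd : d ∣ m := Nat.gcd_dvd_right l m
      have hβd : (σ ^ d) β = β := by
        have hbez : (d : ℤ) = (l : ℤ) * Int.gcdA l m + (m : ℤ) * Int.gcdB l m := by
          have := Int.gcd_eq_gcd_ab (l : ℤ) (m : ℤ)
          simpa [Int.gcd_natCast_natCast] using this
        have h1 : (σ ^ ((l : ℤ) * Int.gcdA l m)) β = β :=
          fix_zpow_mul σ β l (by rw [zpow_natCast]; exact hβl) _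
        have h2 : (σ ^ ((m : ℤ) * Int.gcdB l m)) β = β :=
          fix_zpow_mul σ β m (by rw [zpow_natCast]; exact hβm) _
        have := fix_zpow_add σ β _ _ h1 h2
        rw [← hbez, zpow_natCast] at this
        exact this
      set n := m / d with hn
      have hnd : d * n = m := Nat.mul_div_cancel' hddvd
      have hnpos : 0 < n := by
        rcases Nat.eq_zero_or_pos n with h | h
        · rw [h, mul_zero] at hnd; omega
        · exact h
      set ψK := ψ.map (algebraMap F K) with hψK
      set P := ψK - C β with hP
      have hψKdeg : ψK.natDegree = ψ.natDegree := hmon.natDegree_map _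
      have hPdeg : P.natDegree = ψ.natDegree := by rw [hP, natDegree_sub_C, hψKdeg]
      have hPne : P ≠ 0 := by
        intro h
        rw [h] at hPdeg
        simp at hPdeg
        omega
      have hroot : ∀ j : ℕ, P.IsRoot ((σ ^ (d * j)) α) := by
        intro j
        have hfix : (σ ^ (d * j)) β = β := by
          rw [pow_mul]
          exact fix_pow (σ ^ d) β hβd j
        have : aeval ((σ ^ (d * j)) α) ψ = β := by rw [← hcommn, hfix]
        simp only [IsRoot, hP, eval_sub, eval_C, hψK]
        rw [eval_map, ← aeval_def, this, sub_self]
      have key : ∀ i j : ℕ, i < n → j < n → i < j →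
          (σ ^ (d * i)) α = (σ ^ (d * j)) α → False := by
        intro i j hi hj hlt hij
        have heq : (σ ^ (d * i)) ((σ ^ (d * (j - i))) α) = (σ ^ (d * i)) α := by
          rw [← AlgEquiv.mul_apply, ← pow_add]
          have : d * i + d * (j - i) = d * j := by
            rw [← Nat.mul_add]
            congr 1
            omega
          rw [this]
          exact hij.symm
        have h3 : (σ ^ (d * (j - i))) α = α := (σ ^ (d * i)).injective heq
        rw [hpow] at h3
        have hposij : 0 < d * (j - i) := Nat.mul_pos hdpos (by omega)
        have h4 : m ∣ d * (j - i) := hα2 _ hposij h3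
        have h5 : d * (j - i) < m := by
          rw [← hnd]
          exact Nat.mul_lt_mul_of_le_of_lt (le_refl d) (by omega) hdpos
        have := Nat.le_of_dvd hposij h4
        omega
      have hinj : Set.InjOn (fun j : ℕ => (σ ^ (d * j)) α) (Finset.range n) := by
        intro i hi j hj hij
        simp only [Finset.coe_range, Set.mem_Iio] at hi hj
        simp only [] at hij
        rcases lt_trichotomy i j with h | h | h
        · exact absurd hij (fun h' => key i j hi hj h h')
        · exact h
        · exact absurd hij.symm (fun h' => key j i hj hi h h')
      have hcard : n ≤ ψ.natDegree := by
        classical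
        set s : Finset K := (Finset.range n).image (fun j : ℕ => (σ ^ (d * j)) α) with hs
        have hscard : s.card = n := by
          rw [hs, Finset.card_image_of_injOn hinj, Finset.card_range]
        have hsub : s ⊆ P.roots.toFinset := by
          intro x hx
          rw [hs, Finset.mem_image] at hx
          obtain ⟨j, _, rfl⟩ := hx
          rw [Multiset.mem_toFinset, mem_roots hPne]
          exact hroot j
        calc n = s.card := hscard.symm
          _ ≤ P.roots.toFinset.card := Finset.card_le_card hsub
          _ ≤ Multiset.card P.roots := Multiset.toFinset_card_le _
          _ ≤ P.natDegree := P.card_roots'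
          _ = ψ.natDegree := hPdeg
      have hn1 : n = 1 := by
        by_contra hne
        have hn2 : 2 ≤ n := by omega
        have : m.minFac ≤ n := Nat.minFac_le_of_dvd hn2 ⟨d, by rw [← hnd]; ring⟩
        omega
      have hdm : d = m := by rw [hn1, mul_one] at hnd; exact hnd
      rw [← hdm]
      exact Nat.gcd_dvd_left l m
  refine ⟨part1, ?_⟩
  intro α hα k hk
  have hβmem : aeval α ψ ∈ (Fcal q m : Set K) := part1 α hα
  obtain ⟨hβ1, hβ2⟩ := hβmem
  set β := aeval α ψ with hβdef
  have hfixk : (σ ^ k) β = β := by rw [hβdef, hcomm, hk]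
  have hβm : (σ ^ (m : ℤ)) β = β := by
    rw [zpow_natCast, hcommn, hpow α m, hα.1]
  have hmdvd : (m : ℤ) ∣ k := by
    set r := k % (m : ℤ) with hr
    have hr0 : 0 ≤ r := Int.emod_nonneg k (by exact_mod_cast (by omega : m ≠ 0))
    have hrm : r < (m : ℤ) := Int.emod_lt_of_pos k (by exact_mod_cast (by omega : 0 < m))
    have hfixr : (σ ^ r) β = β := by
      have h1 : (σ ^ ((m : ℤ) * (-(k / (m : ℤ))))) β = β := fix_zpow_mul σ β _ hβm _
      have h2 := fix_zpow_add σ β _ _ hfixk h1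
      have heq : k + (m : ℤ) * (-(k / (m : ℤ))) = r := by
        rw [hr, Int.emod_def]; ring
      rw [heq] at h2
      exact h2
    rcases eq_or_lt_of_le hr0 with h0 | hposr
    · exact Int.dvd_of_emod_eq_zero h0.symm
    · exfalso
      set r' := r.toNat with hr'
      have hrr' : (r' : ℤ) = r := Int.toNat_of_nonneg hr0
      have hr'pos : 0 < r' := by omega
      have hr'm : r' < m := by omega
      have hfr : (σ ^ r') β = β := by
        rw [← zpow_natCast, hrr']
        exact hfixr
      rw [hpow] at hfr
      have hdvd := hβ2 r' hr'pos hfr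
      have := Nat.le_of_dvd hr'pos hdvd
      omega
  obtain ⟨t, ht⟩ := hmdvd
  rw [ht, zpow_mul]
  apply fix_zpow
  rw [zpow_natCast, hpow, hα.1]
end

section
/- Let q be a prime power, let m > 1 be an integer with smallest prime divisor m₁, and let k be an integer not divisible by m. Then for every α ∈ 𝓕_m(q), the elements α − σ^k(α), α² − σ^k(α²), …, α^{m₁−1} − σ^k(α^{m₁−1}) of F_{q^m} are linearly independent over F_q. -/
open Polynomial

/-! If `∑ gᵢ (αⁱ - τ αⁱ) = 0` with `τ = σ^k`, then `β = P(α)` for `P = ∑ gᵢ Xⁱ` is fixed by `τ`,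
so `P - β` vanishes at the conjugates `τ^j α`, `j < m₁`. These are pairwise distinct: `σ^{kt} α = α`
forces `m ∣ kt`, and `0 < t < m₁` is coprime to `m`, so `m ∣ k`. Having more roots than its degree,
`P - β` is zero, so `P` is constant and every `gᵢ` vanishes. -/

theorem Function.Injective.injective_iterate_fin {X : Type*} {f : X → X}
    (hf : Function.Injective f) {x : X} {n : ℕ}
    (hx : ∀ t, 0 < t → t < n → f^[t] x ≠ x) :
    Function.Injective fun j : Fin n => f^[j] x := by
  have key : ∀ a b : Fin n, a < b → f^[a] x ≠ f^[b] x := by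
    intro a b hab h
    have hsplit : f^[b] x = f^[a] (f^[b - a] x) := by
      rw [← Function.iterate_add_apply, Nat.add_sub_cancel' hab.le]
    rw [hsplit] at h
    exact hx (b - a) (by omega) (by omega) ((hf.iterate a) h).symm
  intro a b h
  rcases lt_trichotomy a b with hab | rfl | hab
  · exact absurd h (key a b hab)
  · rfl
  · exact absurd h.symm (key b a hab)

section

variable {K L : Type*} [Field K] [CommRing L] [IsDomain L] [Algebra K L]

theorem Polynomial.natDegree_eq_zero_of_aeval_isFixedPt (τ : L ≃ₐ[K] L) {α : L} {n : ℕ}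
    (hα : ∀ t, 0 < t → t < n → (τ ^ t) α ≠ α) {P : K[X]} (hP : P.natDegree < n)
    (hfix : τ (aeval α P) = aeval α P) : P.natDegree = 0 := by
  have hinj : Function.Injective fun j : Fin n => (τ ^ (j : ℕ)) α := by
    simp only [AlgEquiv.coe_pow] at hα ⊢
    exact τ.injective.injective_iterate_fin hα
  have hconst : P.map (algebraMap K L) = C (aeval α P) := by
    refine eq_of_natDegree_lt_card_of_eval_eq _ _ hinj (fun j => ?_) (by simpa using hP)
    rw [eval_map_algebraMap, eval_C, aeval_algHom_apply, AlgEquiv.coe_pow,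
      Function.IsFixedPt.iterate hfix]
  rw [← natDegree_map (algebraMap K L), hconst, natDegree_C]

theorem linearIndependent_pow_sub_apply_pow (τ : L ≃ₐ[K] L) {α : L} {n : ℕ}
    (hα : ∀ t, 0 < t → t < n → (τ ^ t) α ≠ α) :
    LinearIndependent K fun i : Fin (n - 1) => α ^ ((i : ℕ) + 1) - τ (α ^ ((i : ℕ) + 1)) := by
  rw [Fintype.linearIndependent_iff]
  intro g hg i
  set P : K[X] := ∑ j : Fin (n - 1), monomial ((j : ℕ) + 1) (g j)
  have hfix : τ (aeval α P) = aeval α P := by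
    simp only [smul_sub, Finset.sum_sub_distrib, sub_eq_zero, ← map_smul] at hg
    simpa only [P, map_sum, aeval_monomial, ← Algebra.smul_def] using hg.symm
  have hdeg : P.natDegree < n := by
    have hle : P.natDegree ≤ n - 1 :=
      natDegree_sum_le_of_forall_le _ _ fun j _ => (natDegree_monomial_le _).trans (by omega)
    have := i.isLt
    omega
  have hcoeff := coeff_eq_zero_of_natDegree_lt
    ((P.natDegree_eq_zero_of_aeval_isFixedPt τ hα hdeg hfix).trans_lt i.succ_pos)
  simpa [P, finsetSum_coeff, coeff_monomial, Fin.val_inj] using hcoeff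

end

theorem Fcal.dvd_of_zpow_apply_eq_self {R A : Type*} [CommSemiring R] [Semiring A] [Algebra R A]
    {σ : A ≃ₐ[R] A} {q m : ℕ} (hσ : ∀ x, σ x = x ^ q) {α : A} (hα : α ∈ (Fcal q m : Set A))
    {z : ℤ} (h : (σ ^ z) α = α) : (m : ℤ) ∣ z := by
  have hnat : ∀ n : ℕ, (σ ^ n) α = α → (m : ℤ) ∣ n := by
    intro n hn
    rcases n.eq_zero_or_pos with rfl | hpos
    · exact dvd_zero _
    rw [AlgEquiv.coe_pow, show ⇑σ = (· ^ q) from funext hσ, pow_iterate] at hn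
    exact Int.natCast_dvd_natCast.2 (hα.2 n hpos hn)
  obtain ⟨n, rfl | rfl⟩ := z.eq_nat_or_neg
  · exact hnat n (by rwa [zpow_natCast] at h)
  · rw [zpow_neg, zpow_natCast, AlgEquiv.aut_inv, AlgEquiv.symm_apply_eq] at h
    exact (hnat n h.symm).neg_right

theorem stmt_6_general {F : Type*} [Field F] (q : ℕ)
    (σ : AlgebraicClosure F ≃ₐ[F] AlgebraicClosure F) (hσ : ∀ x, σ x = x ^ q)
    (m m₁ : ℕ) (hm₁ : m₁ = m.minFac)
    (k : ℤ) (hk : ¬ ((m : ℤ) ∣ k))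
    (α : AlgebraicClosure F) (hα : α ∈ (Fcal q m : Set (AlgebraicClosure F))) :
    LinearIndependent F
      (fun i : Fin (m₁ - 1) =>
        α ^ ((i : ℕ) + 1) - (σ ^ k) (α ^ ((i : ℕ) + 1))) := by
  refine linearIndependent_pow_sub_apply_pow (σ ^ k) fun t ht htm h => hk ?_
  rw [← zpow_natCast, ← zpow_mul] at h
  have hcop : IsCoprime (m : ℤ) t :=
    Nat.isCoprime_iff_coprime.2 (Nat.coprime_of_lt_minFac ht.ne' (hm₁ ▸ htm))
  exact hcop.dvd_of_dvd_mul_right (Fcal.dvd_of_zpow_apply_eq_self hσ hα h)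

/-- If `m > 1` has smallest prime divisor `m₁`, `k` is an integer not divisible by `m`,
and `α ∈ 𝓕_m(q)`, then `α - σ^k(α), α² - σ^k(α²), …, α^{m₁-1} - σ^k(α^{m₁-1})` are
linearly independent over `𝔽_q`. -/
theorem stmt_6 {F : Type*} [Field F] [Fintype F] (q : ℕ) (hq : Fintype.card F = q)
    (σ : AlgebraicClosure F ≃ₐ[F] AlgebraicClosure F) (hσ : ∀ x, σ x = x ^ q)
    (m m₁ : ℕ) (hm : 1 < m) (hm₁ : m₁ = m.minFac)
    (k : ℤ) (hk : ¬ ((m : ℤ) ∣ k))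
    (α : AlgebraicClosure F) (hα : α ∈ (Fcal q m : Set (AlgebraicClosure F))) :
    LinearIndependent F
      (fun i : Fin (m₁ - 1) =>
        α ^ ((i : ℕ) + 1) - (σ ^ k) (α ^ ((i : ℕ) + 1))) :=
  stmt_6_general q σ hσ m m₁ hm₁ k hk α hα
end

section
/- Let q be a prime power, let m, n > 1 be relatively prime integers, let m₁ be the smallest prime divisor of m and n₁ the smallest prime divisor of n. Suppose there exists a polynomial φ(x,y) ∈ F_q[x,y] with deg_x φ = m₁ and 0 < deg_y φ < n₁ such that φ(σ^k(α), β) = φ(α, β) for some integer k, some α ∈ 𝓕_m(q) with σ^k(α) ≠ α, and some β ∈ 𝓕_n(q). Then there exists a polynomial ψ(x) ∈ F_q[x] with deg ψ = m₁ which fails to satisfy restricted injectivity on 𝓕_m(q), i.e., there exist α ∈ 𝓕_m(q) and an integer k with ψ(σ^k(α)) = ψ(α) and σ^k(α) ≠ α. -/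
/-! `[𝔽_q(α) : 𝔽_q] = m`, the order of the Frobenius of `𝔽_q(α)`, is coprime to `n`, so the degree
of `β` over `E = 𝔽_q(α)` is divisible by `n` and exceeds `deg_y φ`; and `σ^k(α) ∈ E` because
`E/𝔽_q` is normal. Writing `φ(x, y) = ∑ⱼ cⱼ(x) yʲ`, the relation `φ(σ^k(α), β) = φ(α, β)` is then
a linear relation over `E` between `1, β, …, β^(deg_y φ)`, so `cⱼ(σ^k(α)) = cⱼ(α)` for every `j`;
some `cⱼ` has degree `deg_x φ`, and it is the `ψ` sought. -/

open Polynomial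

open IntermediateField Module

lemma mem_Fcal_of_injective {M N : Type*} [Monoid M] [Monoid N] {f : M →* N}
    (hf : Function.Injective f) {q r : ℕ} {x : M} (hx : f x ∈ (Fcal q r : Set N)) :
    x ∈ (Fcal q r : Set M) :=
  ⟨hf (by rw [map_pow, hx.1]), fun l hl h ↦ hx.2 l hl (by rw [← map_pow, h])⟩

section FiniteField

variable {F : Type*} [Field F] [Fintype F]

lemma dvd_finrank_of_mem_Fcal {K : Type*} [Field K] [Algebra F K] [FiniteDimensional F K]
    {r : ℕ} {γ : K} (hγ : γ ∈ (Fcal (Fintype.card F) r : Set K)) : r ∣ finrank F K := by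
  have : Finite K := Module.finite_of_finite F
  have : Fintype K := Fintype.ofFinite K
  refine hγ.2 _ finrank_pos ?_
  rw [← card_eq_pow_finrank, FiniteField.pow_card]

lemma frobeniusAlgHom_pow_eq_one_iff {L : Type*} [Field L] [Algebra F L] (γ : L) (l : ℕ) :
    FiniteField.frobeniusAlgHom F F⟮γ⟯ ^ l = 1 ↔ γ ^ Fintype.card F ^ l = γ := by
  constructor
  · intro h
    have := congrArg Subtype.val (AlgHom.congr_fun h (AdjoinSimple.gen F γ))
    simpa [AlgHom.coe_pow, FiniteField.coe_frobeniusAlgHom, pow_iterate] using this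
  · intro h
    refine adjoin_algHom_ext F fun x hx ↦ ?_
    rw [Set.mem_singleton_iff] at hx
    subst hx
    ext
    simpa [AlgHom.coe_pow, FiniteField.coe_frobeniusAlgHom, pow_iterate] using h

lemma finrank_adjoin_simple_of_mem_Fcal {L : Type*} [Field L] [Algebra F L] {r : ℕ} {γ : L}
    (hint : IsIntegral F γ) (hγ : γ ∈ (Fcal (Fintype.card F) r : Set L)) :
    finrank F F⟮γ⟯ = r := by
  have : FiniteDimensional F F⟮γ⟯ := adjoin.finiteDimensional hint
  have : Finite F⟮γ⟯ := Module.finite_of_finite F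
  have hord := FiniteField.orderOf_frobeniusAlgHom F F⟮γ⟯
  rw [← hord]
  refine Nat.dvd_antisymm (orderOf_dvd_of_pow_eq_one ?_) ?_
  · exact (frobeniusAlgHom_pow_eq_one_iff γ r).2 hγ.1
  · exact hγ.2 _ (hord ▸ finrank_pos)
      ((frobeniusAlgHom_pow_eq_one_iff γ _).1 (pow_orderOf_eq_one _))

lemma apply_mem_adjoin_simple {L : Type*} [Field L] [Algebra F L] [Normal F L] {α : L}
    (hint : IsIntegral F α) (σ : L →ₐ[F] L) : σ α ∈ F⟮α⟯ := by
  have : FiniteDimensional F F⟮α⟯ := adjoin.finiteDimensional hint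
  have : Finite F⟮α⟯ := Module.finite_of_finite F
  exact normal_iff_forall_map_le.1 inferInstance σ ⟨α, mem_adjoin_simple_self F α, rfl⟩

lemma dvd_finrank_adjoin_simple_of_coprime {L : Type*} [Field L] [Algebra F L]
    (E : IntermediateField F L) [FiniteDimensional F E] {n : ℕ} (hn : (finrank F E).Coprime n)
    {β : L} (hint : IsIntegral F β) (hβ : β ∈ (Fcal (Fintype.card F) n : Set L)) :
    n ∣ finrank E E⟮β⟯ := by
  have : FiniteDimensional E E⟮β⟯ := adjoin.finiteDimensional hint.tower_top
  have : FiniteDimensional F E⟮β⟯ := FiniteDimensional.trans F E E⟮β⟯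
  have hβ' : AdjoinSimple.gen E β ∈ (Fcal (Fintype.card F) n : Set E⟮β⟯) :=
    mem_Fcal_of_injective (f := (E⟮β⟯.val : E⟮β⟯ →* L)) Subtype.val_injective hβ
  have : Module.Free E E⟮β⟯ := .of_divisionRing _ _
  have hdvd := dvd_finrank_of_mem_Fcal (F := F) hβ'
  rw [← Module.finrank_mul_finrank F E E⟮β⟯] at hdvd
  exact hn.symm.dvd_of_dvd_mul_left hdvd

end FiniteField

section Bivariate

variable {R : Type*} [CommSemiring R]

/-- `yCoeff φ j` is `cⱼ` in `φ(x, y) = ∑ⱼ cⱼ(x) yʲ`. -/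
noncomputable def yCoeff (φ : MvPolynomial (Fin 2) R) (j : ℕ) : R[X] :=
  ∑ u ∈ φ.support with u 1 = j, monomial (u 0) (φ.coeff u)

lemma Finsupp.single_zero_add_single_one {M : Type*} [AddZeroClass M] (u : Fin 2 →₀ M) :
    Finsupp.single 0 (u 0) + Finsupp.single 1 (u 1) = u := by
  ext a
  fin_cases a <;> simp

lemma coeff_yCoeff (φ : MvPolynomial (Fin 2) R) (i j : ℕ) :
    (yCoeff φ j).coeff i = φ.coeff (Finsupp.single 0 i + Finsupp.single 1 j) := by
  have key (u : Fin 2 →₀ ℕ) : (u 1 = j ∧ u 0 = i) ↔ u = Finsupp.single 0 i + Finsupp.single 1 j := by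
    refine ⟨fun ⟨h1, h0⟩ ↦ by rw [← Finsupp.single_zero_add_single_one u, h0, h1], ?_⟩
    rintro rfl
    simp
  rw [yCoeff, finsetSum_coeff, Finset.sum_filter]
  simp only [coeff_monomial, ← ite_and, key, Finset.sum_ite_eq']
  split_ifs with h
  · rfl
  · exact (MvPolynomial.notMem_support_iff.1 h).symm

lemma natDegree_yCoeff_le (φ : MvPolynomial (Fin 2) R) (j : ℕ) :
    (yCoeff φ j).natDegree ≤ φ.degreeOf 0 := by
  refine natDegree_le_iff_coeff_eq_zero.2 fun i hi ↦ ?_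
  rw [coeff_yCoeff, ← MvPolynomial.notMem_support_iff]
  exact MvPolynomial.notMem_support_of_degreeOf_lt 0 (by simpa using hi)

lemma yCoeff_eq_zero_of_degreeOf_lt {φ : MvPolynomial (Fin 2) R} {j : ℕ}
    (hj : φ.degreeOf 1 < j) : yCoeff φ j = 0 := by
  ext i
  rw [coeff_yCoeff, coeff_zero, ← MvPolynomial.notMem_support_iff]
  exact MvPolynomial.notMem_support_of_degreeOf_lt 1 (by simpa using hj)

lemma exists_natDegree_yCoeff_eq_degreeOf (φ : MvPolynomial (Fin 2) R) :
    ∃ j, (yCoeff φ j).natDegree = φ.degreeOf 0 := by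
  rcases eq_or_ne φ 0 with rfl | hφ
  · exact ⟨0, by simp [yCoeff]⟩
  obtain ⟨u, hu, hmax⟩ := Finset.exists_mem_eq_sup φ.support
    (MvPolynomial.support_nonempty.2 hφ) (fun u ↦ u 0)
  refine ⟨u 1, (natDegree_yCoeff_le φ _).antisymm ?_⟩
  rw [MvPolynomial.degreeOf_eq_sup, hmax]
  refine le_natDegree_of_ne_zero ?_
  rwa [coeff_yCoeff, Finsupp.single_zero_add_single_one, ← MvPolynomial.mem_support_iff]

lemma aeval_eq_sum_yCoeff {A : Type*} [CommSemiring A] [Algebra R A]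
    (φ : MvPolynomial (Fin 2) R) {N : ℕ} (hN : φ.degreeOf 1 < N) (x y : A) :
    MvPolynomial.aeval ![x, y] φ = ∑ j ∈ Finset.range N, aeval x (yCoeff φ j) * y ^ j := by
  have hmaps : ∀ u ∈ φ.support, u 1 ∈ Finset.range N := fun u hu ↦
    Finset.mem_range.2 ((MvPolynomial.le_degreeOf_of_mem_support 1 hu).trans_lt hN)
  rw [MvPolynomial.aeval_def, MvPolynomial.eval₂_eq', ← Finset.sum_fiberwise_of_maps_to hmaps]
  refine Finset.sum_congr rfl fun j _ ↦ ?_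
  rw [yCoeff, map_sum, Finset.sum_mul]
  refine Finset.sum_congr rfl fun u hu ↦ ?_
  rw [(Finset.mem_filter.1 hu).2.symm, Fin.prod_univ_two, aeval_monomial]
  simp [mul_assoc]

lemma aeval_yCoeff_eq_of_aeval_eq {K L : Type*} [Field K] [Field L] [Algebra R K] [Algebra K L]
    [Algebra R L] [IsScalarTower R K L] {φ : MvPolynomial (Fin 2) R} {a b : K} {β : L}
    (hdeg : φ.degreeOf 1 < (minpoly K β).natDegree)
    (h : MvPolynomial.aeval ![algebraMap K L a, β] φ = MvPolynomial.aeval ![algebraMap K L b, β] φ)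
    (j : ℕ) : aeval a (yCoeff φ j) = aeval b (yCoeff φ j) := by
  set N := (minpoly K β).natDegree
  by_cases hj : j < N
  swap
  · rw [yCoeff_eq_zero_of_degreeOf_lt (by omega), map_zero, map_zero]
  have hsum : ∑ i : Fin N, (aeval a (yCoeff φ i) - aeval b (yCoeff φ i)) • β ^ (i : ℕ) = 0 := by
    rw [Fin.sum_univ_eq_sum_range (fun i ↦ (aeval a (yCoeff φ i) - aeval b (yCoeff φ i)) • β ^ i)]
    simp only [Algebra.smul_def, map_sub, sub_mul, Finset.sum_sub_distrib, ← aeval_algebraMap_apply]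
    rw [← aeval_eq_sum_yCoeff φ hdeg, ← aeval_eq_sum_yCoeff φ hdeg, h, sub_self]
  exact sub_eq_zero.1 (Fintype.linearIndependent_iff.1 (linearIndependent_pow β) _ hsum ⟨j, hj⟩)

end Bivariate

theorem stmt_13_general {F : Type*} [Field F] [Fintype F] (q : ℕ) (hq : Fintype.card F = q)
    (σ : AlgebraicClosure F ≃ₐ[F] AlgebraicClosure F)
    (m n m₁ n₁ : ℕ) (hmn : Nat.Coprime m n)
    (hn₁ : n₁ = n.minFac)
    (φ : MvPolynomial (Fin 2) F)
    (hx : φ.degreeOf 0 = m₁) (hy₁ : φ.degreeOf 1 < n₁)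
    (k : ℤ) (α β : AlgebraicClosure F)
    (hα : α ∈ (Fcal q m : Set (AlgebraicClosure F)))
    (hβ : β ∈ (Fcal q n : Set (AlgebraicClosure F)))
    (hne : (σ ^ k) α ≠ α)
    (hφ : MvPolynomial.aeval ![(σ ^ k) α, β] φ = MvPolynomial.aeval ![α, β] φ) :
    ∃ ψ : Polynomial F, ψ.natDegree = m₁ ∧
      ∃ α' ∈ (Fcal q m : Set (AlgebraicClosure F)), ∃ k' : ℤ,
        Polynomial.aeval ((σ ^ k') α') ψ = Polynomial.aeval α' ψ ∧ (σ ^ k') α' ≠ α' := by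
  subst hq hn₁
  have hαint : IsIntegral F α := Algebra.IsIntegral.isIntegral α
  have hβint : IsIntegral F β := Algebra.IsIntegral.isIntegral β
  have : FiniteDimensional F F⟮α⟯ := adjoin.finiteDimensional hαint
  have hσα : (σ ^ k) α ∈ F⟮α⟯ := apply_mem_adjoin_simple hαint (σ ^ k : _ ≃ₐ[F] _).toAlgHom
  have hdvd : n ∣ finrank F⟮α⟯ F⟮α⟯⟮β⟯ := dvd_finrank_adjoin_simple_of_coprime F⟮α⟯
    (by rwa [finrank_adjoin_simple_of_mem_Fcal hαint hα]) hβint hβ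
  have hdeg : φ.degreeOf 1 < (minpoly F⟮α⟯ β).natDegree := by
    have : FiniteDimensional F⟮α⟯ F⟮α⟯⟮β⟯ := adjoin.finiteDimensional hβint.tower_top
    rw [← adjoin.finrank hβint.tower_top]
    exact hy₁.trans_le (Nat.le_of_dvd finrank_pos ((Nat.minFac_dvd n).trans hdvd))
  obtain ⟨j, hj⟩ := exists_natDegree_yCoeff_eq_degreeOf φ
  refine ⟨yCoeff φ j, hj.trans hx, α, hα, k, ?_, hne⟩
  have hcoeff := congrArg (algebraMap F⟮α⟯ (AlgebraicClosure F)) <|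
    aeval_yCoeff_eq_of_aeval_eq (a := (⟨(σ ^ k) α, hσα⟩ : F⟮α⟯))
      (b := AdjoinSimple.gen F α) hdeg hφ j
  rwa [← aeval_algebraMap_apply, ← aeval_algebraMap_apply] at hcoeff

/-- (Proposition, (i) ⟹ (ii).)  If there is `φ(x,y) ∈ 𝔽_q[x,y]` with `deg_x φ = m₁`,
`0 < deg_y φ < n₁`, such that `φ(σ^k(α), β) = φ(α, β)` for some `k ∈ ℤ`,
`α ∈ 𝓕_m(q)` with `σ^k(α) ≠ α`, and `β ∈ 𝓕_n(q)`, then there is `ψ(x) ∈ 𝔽_q[x]` with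
`deg ψ = m₁` failing restricted injectivity on `𝓕_m(q)`. -/
theorem stmt_13 {F : Type*} [Field F] [Fintype F] (q : ℕ) (hq : Fintype.card F = q)
    (σ : AlgebraicClosure F ≃ₐ[F] AlgebraicClosure F) (hσ : ∀ x, σ x = x ^ q)
    (m n m₁ n₁ : ℕ) (hm : 1 < m) (hn : 1 < n) (hmn : Nat.Coprime m n)
    (hm₁ : m₁ = m.minFac) (hn₁ : n₁ = n.minFac)
    (φ : MvPolynomial (Fin 2) F)
    (hx : φ.degreeOf 0 = m₁) (hy₀ : 0 < φ.degreeOf 1) (hy₁ : φ.degreeOf 1 < n₁)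
    (k : ℤ) (α β : AlgebraicClosure F)
    (hα : α ∈ (Fcal q m : Set (AlgebraicClosure F)))
    (hβ : β ∈ (Fcal q n : Set (AlgebraicClosure F)))
    (hne : (σ ^ k) α ≠ α)
    (hφ : MvPolynomial.aeval ![(σ ^ k) α, β] φ = MvPolynomial.aeval ![α, β] φ) :
    ∃ ψ : Polynomial F, ψ.natDegree = m₁ ∧
      ∃ α' ∈ (Fcal q m : Set (AlgebraicClosure F)), ∃ k' : ℤ,
        Polynomial.aeval ((σ ^ k') α') ψ = Polynomial.aeval α' ψ ∧ (σ ^ k') α' ≠ α' :=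
  stmt_13_general q hq σ m n m₁ n₁ hmn hn₁ φ hx hy₁ k α β hα hβ hne hφ
end

section
/- Let q be a prime power, let m > 1 be an integer with smallest prime divisor m₁. Suppose there exists a polynomial ψ(x) ∈ F_q[x] with deg ψ = m₁ which fails restricted injectivity on 𝓕_m(q), i.e., there exist α ∈ 𝓕_m(q) and an integer k with ψ(σ^k(α)) = ψ(α) and σ^k(α) ≠ α. Then there exist α ∈ 𝓕_m(q) and c₁, …, c_{m₁−1} ∈ F_q such that α^{m₁} + Σ_{i=1}^{m₁−1} c_i α^i ∈ 𝓕_{m/m₁}(q). -/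
open Polynomial

/-!
With `σ` the Frobenius, `α ∈ 𝓕_m(q)` says exactly that `α` has period `m` under `σ`, and
`ψ(α)` has a period `d` dividing `m`. The points `σ^{dj} α`, `0 ≤ j < m/d`, are distinct and all
lie in the fibre of `ψ` over `ψ(α)`, so `m/d ≤ deg ψ = m₁`. Failure of injectivity means `d ≠ m`,
so `m/d` is a divisor of `m` other than `1`, hence `m/d ≥ m₁`. Thus `ψ(α)` has period `m/m₁`, and
so does its monic, constant-free affine normalisation, which is of the required shape.
-/

open MulAction

namespace Polynomial

variable {F : Type*} [Field F]

noncomputable def affineNormalForm (ψ : F[X]) : F[X] :=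
  C ψ.leadingCoeff⁻¹ * (ψ - C (ψ.coeff 0))

lemma natDegree_affineNormalForm (ψ : F[X]) :
    ψ.affineNormalForm.natDegree = ψ.natDegree := by
  rcases eq_or_ne ψ 0 with rfl | hψ
  · simp [affineNormalForm]
  rw [affineNormalForm, natDegree_C_mul (inv_ne_zero (leadingCoeff_ne_zero.2 hψ)), natDegree_sub_C]

lemma monic_affineNormalForm {ψ : F[X]} (hψ : 0 < ψ.natDegree) : ψ.affineNormalForm.Monic := by
  have hne : ψ ≠ 0 := by rintro rfl; simp at hψ
  have hlc : (ψ - C (ψ.coeff 0)).leadingCoeff = ψ.leadingCoeff := by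
    rw [leadingCoeff, natDegree_sub_C, coeff_sub, coeff_C, if_neg hψ.ne', sub_zero, leadingCoeff]
  refine monic_C_mul_of_mul_leadingCoeff_eq_one ?_
  rw [hlc]
  exact inv_mul_cancel₀ (leadingCoeff_ne_zero.2 hne)

@[simp]
lemma coeff_affineNormalForm_zero (ψ : F[X]) : ψ.affineNormalForm.coeff 0 = 0 := by
  simp [affineNormalForm]

lemma aeval_affineNormalForm {K : Type*} [Field K] [Algebra F K] (ψ : F[X]) (x : K) :
    aeval x ψ.affineNormalForm =
      algebraMap F K ψ.leadingCoeff⁻¹ * (aeval x ψ - algebraMap F K (ψ.coeff 0)) := by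
  simp [affineNormalForm]

lemma aeval_eq_pow_add_sum_Ico {K : Type*} [CommRing K] [Algebra F K] {φ : F[X]}
    (hφ : φ.Monic) (hφ0 : φ.coeff 0 = 0) (x : K) :
    aeval x φ = x ^ φ.natDegree +
      ∑ i ∈ Finset.Ico 1 φ.natDegree, algebraMap F K (φ.coeff i) * x ^ i := by
  have hpos : 0 < φ.natDegree := by
    refine Nat.pos_of_ne_zero fun h => ?_
    simp [hφ.natDegree_eq_zero.1 h] at hφ0
  rw [aeval_eq_sum_range, Finset.sum_range_succ, Finset.range_eq_Ico,
    Finset.sum_eq_sum_Ico_succ_bot hpos, hφ0, hφ.coeff_natDegree]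
  simp only [Algebra.smul_def, map_zero, map_one]
  ring

end Polynomial

section Period

variable {F K : Type*} [Field F] [Field K] [Algebra F K]

lemma smul_aeval (g : K ≃ₐ[F] K) (x : K) (ψ : F[X]) : g • aeval x ψ = aeval (g • x) ψ :=
  (aeval_algHom_apply g x ψ).symm

lemma period_aeval_dvd (σ : K ≃ₐ[F] K) (x : K) (ψ : F[X]) :
    period σ (aeval x ψ) ∣ period σ x := by
  rw [← pow_smul_eq_iff_period_dvd, smul_aeval, pow_period_smul]

-- The orbit of `x` under `σ ^ period σ (ψ x)` consists of roots of `ψ - ψ x`.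
lemma period_le_period_aeval_mul_natDegree (σ : K ≃ₐ[F] K) (x : K) {ψ : F[X]}
    (hψ : 0 < ψ.natDegree) :
    period σ x ≤ period σ (aeval x ψ) * ψ.natDegree := by
  set n := period σ x
  set d := period σ (aeval x ψ)
  obtain ⟨t, hnt⟩ : d ∣ n := period_aeval_dvd σ x ψ
  rcases Nat.eq_zero_or_pos n with hn | hn
  · rw [hn]; exact Nat.zero_le _
  have hd : 0 < d := Nat.pos_of_dvd_of_pos ⟨t, hnt⟩ hn
  set p : K[X] := ψ.map (algebraMap F K) - C (aeval x ψ)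
  have hp : p.natDegree = ψ.natDegree := by
    rw [natDegree_sub_C, natDegree_map]
  have hp0 : p ≠ 0 := by
    rintro h; rw [h, natDegree_zero] at hp; omega
  have hinj : Set.InjOn (fun j => σ ^ (d * j) • x) (Finset.range t) := by
    intro i hi j hj hij
    simp only [Finset.coe_range, Set.mem_Iio] at hi hj
    have hlt : ∀ l < t, d * l < n := fun l hl => by
      rw [hnt]; exact Nat.mul_lt_mul_of_pos_left hl hd
    simp only [← smul_iterate_apply] at hij
    exact Nat.eq_of_mul_eq_mul_left hd
      (Function.iterate_injOn_Iio_minimalPeriod (hlt i hi) (hlt j hj) hij)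
  classical
  have hroots : ((Finset.range t).image fun j => σ ^ (d * j) • x).val ⊆ p.roots := by
    intro y hy
    obtain ⟨j, -, rfl⟩ := Finset.mem_image.1 (Finset.mem_def.2 hy)
    rw [mem_roots hp0, IsRoot, eval_sub, eval_C, eval_map_algebraMap, ← smul_aeval,
      pow_smul_eq_iff_period_dvd.2 (dvd_mul_right d j), sub_self]
  have := card_le_degree_of_subset_roots hroots
  rw [Finset.card_image_of_injOn hinj, Finset.card_range, hp] at this
  rw [hnt]
  exact Nat.mul_le_mul_left d this

theorem period_aeval_eq_div_minFac (σ : K ≃ₐ[F] K) {x : K} {m : ℕ} (hx : period σ x = m)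
    (hm : 1 < m) {ψ : F[X]} (hψ : ψ.natDegree = m.minFac) {k : ℤ}
    (hfail : aeval (σ ^ k • x) ψ = aeval x ψ) (hne : σ ^ k • x ≠ x) :
    period σ (aeval x ψ) = m / m.minFac := by
  set d := period σ (aeval x ψ)
  obtain ⟨t, hmt⟩ : d ∣ m := hx ▸ period_aeval_dvd σ x ψ
  have hd : 0 < d := Nat.pos_of_ne_zero (by rintro h; rw [h, zero_mul] at hmt; omega)
  have hdk : (d : ℤ) ∣ k := by rwa [← zpow_smul_eq_iff_period_dvd, smul_aeval]
  have ht1 : t ≠ 1 := by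
    rintro rfl
    rw [mul_one] at hmt
    exact hne (zpow_smul_eq_iff_period_dvd.2 (hx ▸ hmt ▸ hdk))
  have ht0 : t ≠ 0 := by rintro rfl; omega
  have hminFac_le : m.minFac ≤ t := Nat.minFac_le_of_dvd (by omega) (Dvd.intro_left d hmt.symm)
  have hle : d * t ≤ d * m.minFac := by
    rw [← hmt, ← hψ, ← hx]
    exact period_le_period_aeval_mul_natDegree σ x (hψ ▸ Nat.minFac_pos m)
  have ht : t = m.minFac := le_antisymm (Nat.le_of_mul_le_mul_left hle hd) hminFac_le
  rw [← ht, hmt, Nat.mul_div_cancel _ (ht ▸ Nat.minFac_pos m)]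

lemma pow_smul_eq_pow_pow {q : ℕ} {σ : K ≃ₐ[F] K} (hσ : ∀ x, σ x = x ^ q) (n : ℕ) (x : K) :
    σ ^ n • x = x ^ q ^ n := by
  induction n with
  | zero => simp
  | succ n ih => rw [pow_succ', mul_smul, ih, AlgEquiv.smul_def, hσ, ← pow_mul, pow_succ]

lemma mem_Fcal_iff_period_eq {q : ℕ} {σ : K ≃ₐ[F] K} (hσ : ∀ x, σ x = x ^ q) {m : ℕ}
    (hm : 0 < m) {x : K} : x ∈ (Fcal q m : Set K) ↔ period σ x = m := by
  simp only [Fcal, Set.mem_ofPred_eq, ← pow_smul_eq_pow_pow hσ, pow_smul_eq_iff_period_dvd]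
  constructor
  · rintro ⟨hdvd, hmin⟩
    exact Nat.dvd_antisymm hdvd (hmin _ (Nat.pos_of_dvd_of_pos hdvd hm) dvd_rfl)
  · rintro rfl
    exact ⟨dvd_rfl, fun _ _ => id⟩

end Period

theorem stmt_14_general {F : Type*} [Field F] (q : ℕ)
    (σ : AlgebraicClosure F ≃ₐ[F] AlgebraicClosure F) (hσ : ∀ x, σ x = x ^ q)
    (m m₁ : ℕ) (hm : 1 < m) (hm₁ : m₁ = m.minFac)
    (ψ : Polynomial F) (hdeg : ψ.natDegree = m₁)
    (α₀ : AlgebraicClosure F) (hα₀ : α₀ ∈ (Fcal q m : Set (AlgebraicClosure F)))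
    (k : ℤ) (hfail : Polynomial.aeval ((σ ^ k) α₀) ψ = Polynomial.aeval α₀ ψ)
    (hne : (σ ^ k) α₀ ≠ α₀) :
    ∃ α ∈ (Fcal q m : Set (AlgebraicClosure F)), ∃ c : ℕ → F,
      α ^ m₁ + ∑ i ∈ Finset.Ico 1 m₁, algebraMap F (AlgebraicClosure F) (c i) * α ^ i ∈
        (Fcal q (m / m₁) : Set (AlgebraicClosure F)) := by
  subst hm₁
  set φ := ψ.affineNormalForm
  have hφ : φ.natDegree = m.minFac := (natDegree_affineNormalForm ψ).trans hdeg
  have hφmonic : φ.Monic := monic_affineNormalForm (hdeg ▸ Nat.minFac_pos m)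
  have hperiod : period σ (aeval α₀ φ) = m / m.minFac := by
    rw [← AlgEquiv.smul_def] at hfail hne
    refine period_aeval_eq_div_minFac σ ((mem_Fcal_iff_period_eq hσ (by omega)).1 hα₀) hm hφ ?_ hne
    rw [aeval_affineNormalForm, aeval_affineNormalForm, hfail]
  refine ⟨α₀, hα₀, φ.coeff, ?_⟩
  rw [← hφ, ← aeval_eq_pow_add_sum_Ico hφmonic (coeff_affineNormalForm_zero ψ), hφ,
    mem_Fcal_iff_period_eq hσ (Nat.div_pos (Nat.minFac_le (by omega)) (Nat.minFac_pos m))]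
  exact hperiod

/-- (Proposition, (ii) ⟹ (iii).)  If there is `ψ(x) ∈ 𝔽_q[x]` with `deg ψ = m₁`
(`m₁` the smallest prime divisor of `m > 1`) failing restricted injectivity on
`𝓕_m(q)`, then there are `α ∈ 𝓕_m(q)` and `c₁, …, c_{m₁-1} ∈ 𝔽_q` with
`α^{m₁} + Σ_{i=1}^{m₁-1} c_i α^i ∈ 𝓕_{m/m₁}(q)`. -/
theorem stmt_14 {F : Type*} [Field F] [Fintype F] (q : ℕ) (hq : Fintype.card F = q)
    (σ : AlgebraicClosure F ≃ₐ[F] AlgebraicClosure F) (hσ : ∀ x, σ x = x ^ q)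
    (m m₁ : ℕ) (hm : 1 < m) (hm₁ : m₁ = m.minFac)
    (ψ : Polynomial F) (hdeg : ψ.natDegree = m₁)
    (α₀ : AlgebraicClosure F) (hα₀ : α₀ ∈ (Fcal q m : Set (AlgebraicClosure F)))
    (k : ℤ) (hfail : Polynomial.aeval ((σ ^ k) α₀) ψ = Polynomial.aeval α₀ ψ)
    (hne : (σ ^ k) α₀ ≠ α₀) :
    ∃ α ∈ (Fcal q m : Set (AlgebraicClosure F)), ∃ c : ℕ → F,
      α ^ m₁ + ∑ i ∈ Finset.Ico 1 m₁, algebraMap F (AlgebraicClosure F) (c i) * α ^ i ∈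
        (Fcal q (m / m₁) : Set (AlgebraicClosure F)) :=
  stmt_14_general q σ hσ m m₁ hm hm₁ ψ hdeg α₀ hα₀ k hfail hne
end

section
/- Let q be a prime power, let m > 1 be an integer with smallest prime divisor m₁. Suppose there exist α ∈ 𝓕_m(q) and c₁, …, c_{m₁−1} ∈ F_q such that α^{m₁} + Σ_{i=1}^{m₁−1} c_i α^i ∈ 𝓕_{m/m₁}(q). Then there exists a monic irreducible polynomial f(x) ∈ F_{q^{m/m₁}}[x] of degree m₁ such that f(x) − f(0) has all its coefficients in F_q and f(0) ∈ 𝓕_{m/m₁}(q). -/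
/-!
Put `n = m / m₁` and let `K` be the fixed field of `σ ^ n`. With `P = X^{m₁} + Σ cᵢ Xⁱ`, the
element `β = P(α)` lies in `K`, so `α` is a root of the monic polynomial `f = P - β ∈ K[X]` of
degree `m₁`. Because `α` generates `𝔽_{q^m}`, its images `(σ ^ n) ^ j α` for `0 ≤ j < m₁` are
pairwise distinct, and they are all roots of the minimal polynomial of `α` over `K`; hence that
minimal polynomial has degree `m₁` and equals `f`. Finally `f(0) = -β`, and `-β` generates the
same field as `β`.
-/

open Polynomial

open IntermediateField

section FixedField

variable {F L : Type*} [Field F] [Field L] [Algebra F L] (τ : L ≃ₐ[F] L)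

lemma aeval_apply_of_fixedField_zpowers (p : (fixedField (Subgroup.zpowers τ))[X]) (x : L) :
    aeval (τ x) p = τ (aeval x p) := by
  have hτ : τ ∈ fixingSubgroup (fixedField (Subgroup.zpowers τ)) :=
    (le_iff_le _ _).1 le_rfl (Subgroup.mem_zpowers τ)
  exact aeval_algHom_apply (fixingSubgroupEquiv _ ⟨τ, hτ⟩) x p

lemma mem_fixedField_zpowers_of_apply_eq {x : L} (hx : τ x = x) :
    x ∈ fixedField (Subgroup.zpowers τ) :=
  (mem_fixedField_iff _ x).2 fun _ hg ↦
    Subgroup.zpowers_le.2 (show τ ∈ MulAction.stabilizer (L ≃ₐ[F] L) x from hx) hg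

lemma injOn_pow_apply {α : L} {d : ℕ} (horbit : ∀ j, 0 < j → j < d → (τ ^ j) α ≠ α) :
    Set.InjOn (fun j ↦ (τ ^ j) α) (Finset.range d) := by
  have hne : ∀ i j, i < j → j < d → (τ ^ i) α ≠ (τ ^ j) α := fun i j hij hjd heq ↦ by
    refine horbit (j - i) (by omega) (by omega) ((τ ^ i).injective ?_)
    rw [← AlgEquiv.mul_apply, ← pow_add, Nat.add_sub_cancel' hij.le, heq]
  intro i hi j hj heq
  simp only [Finset.coe_range, Set.mem_Iio] at hi hj
  rcases lt_trichotomy i j with h | h | h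
  · exact absurd heq (hne i j h hj)
  · exact h
  · exact absurd heq.symm (hne j i h hi)

lemma le_natDegree_minpoly_fixedField_zpowers {α : L}
    (hα : IsIntegral (fixedField (Subgroup.zpowers τ)) α) {d : ℕ}
    (horbit : ∀ j, 0 < j → j < d → (τ ^ j) α ≠ α) :
    d ≤ (minpoly (fixedField (Subgroup.zpowers τ)) α).natDegree := by
  classical
  set μ := minpoly (fixedField (Subgroup.zpowers τ)) α
  have hroot : ∀ j : ℕ, aeval ((τ ^ j) α) μ = 0 := fun j ↦ by
    induction j with
    | zero => exact minpoly.aeval _ α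
    | succ j ih => rw [pow_succ', AlgEquiv.mul_apply, aeval_apply_of_fixedField_zpowers, ih,
        map_zero]
  have hsub : ((Finset.range d).image fun j ↦ (τ ^ j) α).val ⊆ (μ.map (algebraMap _ L)).roots := by
    intro x hx
    obtain ⟨j, -, rfl⟩ := Finset.mem_image.1 (Finset.mem_def.2 hx)
    rw [mem_roots (map_ne_zero (minpoly.ne_zero hα)), IsRoot.def, eval_map_algebraMap]
    exact hroot j
  calc d = ((Finset.range d).image fun j ↦ (τ ^ j) α).card := by
          rw [Finset.card_image_of_injOn (injOn_pow_apply τ horbit), Finset.card_range]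
    _ ≤ (μ.map (algebraMap _ L)).natDegree := card_le_degree_of_subset_roots hsub
    _ = μ.natDegree := (minpoly.monic hα).natDegree_map _

lemma eq_minpoly_fixedField_zpowers {α : L} {g : (fixedField (Subgroup.zpowers τ))[X]}
    (hg : g.Monic) (hroot : aeval α g = 0)
    (horbit : ∀ j, 0 < j → j < g.natDegree → (τ ^ j) α ≠ α) :
    g = minpoly (fixedField (Subgroup.zpowers τ)) α := by
  have hα : IsIntegral (fixedField (Subgroup.zpowers τ)) α := ⟨g, hg, hroot⟩
  exact eq_of_monic_of_dvd_of_natDegree_le (minpoly.monic hα) hg (minpoly.dvd _ α hroot)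
    (le_natDegree_minpoly_fixedField_zpowers τ hα horbit)

end FixedField

section Frobenius

variable {F L : Type*} [Field F] [Field L] [Algebra F L] {q : ℕ} {σ : L ≃ₐ[F] L}

lemma pow_apply_eq_pow_pow (hσ : ∀ x, σ x = x ^ q) (k : ℕ) (x : L) : (σ ^ k) x = x ^ q ^ k := by
  rw [AlgEquiv.coe_pow, funext hσ, pow_iterate]

lemma neg_mem_Fcal (hσ : ∀ x, σ x = x ^ q) {k : ℕ} {x : L} (hx : x ∈ (Fcal q k : Set L)) :
    -x ∈ (Fcal q k : Set L) := by
  have hneg : ∀ l, (-x) ^ q ^ l = -x ^ q ^ l := fun l ↦ by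
    rw [← pow_apply_eq_pow_pow hσ, map_neg, pow_apply_eq_pow_pow hσ]
  refine ⟨by rw [hneg, hx.1], fun l hl hxl ↦ hx.2 l hl ?_⟩
  rwa [hneg, neg_inj] at hxl

lemma pow_pow_apply_ne_self_of_mem_Fcal (hσ : ∀ x, σ x = x ^ q) {d n : ℕ} (hn : 0 < n)
    {α : L} (hα : α ∈ (Fcal q (d * n) : Set L)) {j : ℕ} (hj₀ : 0 < j) (hj : j < d) :
    ((σ ^ n) ^ j) α ≠ α := by
  intro hfix
  rw [← pow_mul, pow_apply_eq_pow_pow hσ] at hfix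
  have hdvd : d * n ∣ j * n := mul_comm n j ▸ hα.2 (n * j) (by positivity) hfix
  exact absurd (Nat.le_of_dvd hj₀ (Nat.dvd_of_mul_dvd_mul_right hn hdvd)) (by omega)

end Frobenius

namespace Polynomial

variable {R : Type*} [CommRing R]

lemma degree_sum_Ico_C_mul_X_pow_lt (c : ℕ → R) (d : ℕ) :
    (∑ i ∈ Finset.Ico 1 d, C (c i) * X ^ i).degree < (d : WithBot ℕ) :=
  (degree_sum_le _ _).trans_lt <| (Finset.sup_lt_iff (WithBot.bot_lt_coe d)).2 fun _ hi ↦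
    (degree_C_mul_X_pow_le _ _).trans_lt (WithBot.coe_lt_coe.2 (Finset.mem_Ico.1 hi).2)

lemma monic_X_pow_add_sum_Ico (c : ℕ → R) (d : ℕ) :
    (X ^ d + ∑ i ∈ Finset.Ico 1 d, C (c i) * X ^ i).Monic :=
  monic_X_pow_add (degree_sum_Ico_C_mul_X_pow_lt c d)

lemma natDegree_X_pow_add_sum_Ico [Nontrivial R] (c : ℕ → R) (d : ℕ) :
    (X ^ d + ∑ i ∈ Finset.Ico 1 d, C (c i) * X ^ i).natDegree = d :=
  natDegree_eq_of_degree_eq_some <| by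
    rw [degree_add_eq_left_of_degree_lt
      (by rw [degree_X_pow]; exact degree_sum_Ico_C_mul_X_pow_lt c d), degree_X_pow]

lemma coeff_zero_X_pow_add_sum_Ico (c : ℕ → R) {d : ℕ} (hd : 0 < d) :
    (X ^ d + ∑ i ∈ Finset.Ico 1 d, C (c i) * X ^ i).coeff 0 = 0 := by
  rw [coeff_add, coeff_X_pow, if_neg hd.ne, finsetSum_coeff, Finset.sum_eq_zero, add_zero]
  intro i hi
  rw [coeff_C_mul_X_pow, if_neg (by have := (Finset.mem_Ico.1 hi).1; omega)]

lemma Monic.sub_C_of_natDegree_pos {p : R[X]} (hp : p.Monic) (hd : 0 < p.natDegree) (b : R) :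
    (p - C b).Monic :=
  hp.sub_of_left (degree_C_le.trans_lt (natDegree_pos_iff_degree_pos.1 hd))

end Polynomial

theorem stmt_15_general {F : Type*} [Field F] (q : ℕ)
    (σ : AlgebraicClosure F ≃ₐ[F] AlgebraicClosure F) (hσ : ∀ x, σ x = x ^ q)
    (m m₁ : ℕ) (hm : 1 < m) (hm₁ : m₁ = m.minFac)
    (α : AlgebraicClosure F) (hα : α ∈ (Fcal q m : Set (AlgebraicClosure F)))
    (c : ℕ → F)
    (hc : α ^ m₁ + ∑ i ∈ Finset.Ico 1 m₁, algebraMap F (AlgebraicClosure F) (c i) * α ^ i ∈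
      (Fcal q (m / m₁) : Set (AlgebraicClosure F))) :
    ∃ f : Polynomial
        (IntermediateField.fixedField (Subgroup.zpowers (σ ^ (m / m₁)))),
      f.Monic ∧ Irreducible f ∧ f.natDegree = m₁ ∧
      (∀ i : ℕ, ∃ a : F,
        (((f - Polynomial.C (f.eval 0)).coeff i : _) : AlgebraicClosure F) =
          algebraMap F (AlgebraicClosure F) a) ∧
      ((f.eval 0 : _) : AlgebraicClosure F) ∈
        (Fcal q (m / m₁) : Set (AlgebraicClosure F)) := by
  obtain ⟨hm₁m, hm₁₀⟩ : m₁ ∣ m ∧ 0 < m₁ := hm₁ ▸ ⟨m.minFac_dvd, m.minFac_pos⟩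
  have hn : 0 < m / m₁ := Nat.div_pos (Nat.le_of_dvd (by omega) hm₁m) hm₁₀
  set K := fixedField (Subgroup.zpowers (σ ^ (m / m₁)))
  set P : F[X] := X ^ m₁ + ∑ i ∈ Finset.Ico 1 m₁, C (c i) * X ^ i
  have hP_monic : (P.map (algebraMap F K)).Monic := (monic_X_pow_add_sum_Ico c m₁).map _
  have hP_deg : (P.map (algebraMap F K)).natDegree = m₁ := by
    rw [(monic_X_pow_add_sum_Ico c m₁).natDegree_map, natDegree_X_pow_add_sum_Ico]
  set β := α ^ m₁ + ∑ i ∈ Finset.Ico 1 m₁, algebraMap F (AlgebraicClosure F) (c i) * α ^ i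
  have hβ : β ∈ K := mem_fixedField_zpowers_of_apply_eq _ (by rw [pow_apply_eq_pow_pow hσ, hc.1])
  set f : K[X] := P.map (algebraMap F K) - C ⟨β, hβ⟩
  have hf_monic : f.Monic := hP_monic.sub_C_of_natDegree_pos (hP_deg ▸ hm₁₀) _
  have hf_deg : f.natDegree = m₁ := natDegree_sub_C.trans hP_deg
  have hf_root : aeval α f = 0 := by
    simp [f, P, β]
  have hf_minpoly : f = minpoly K α := eq_minpoly_fixedField_zpowers _ hf_monic hf_root
    fun j hj₀ hj ↦ pow_pow_apply_ne_self_of_mem_Fcal hσ hn (Nat.mul_div_cancel' hm₁m ▸ hα) hj₀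
      (hf_deg ▸ hj)
  have hf_eval : f.eval 0 = -⟨β, hβ⟩ := by
    rw [eval_sub, eval_C, eval_map, eval₂_at_zero, coeff_zero_X_pow_add_sum_Ico c hm₁₀, map_zero,
      zero_sub]
  refine ⟨f, hf_monic, hf_minpoly ▸ minpoly.irreducible ⟨f, hf_monic, hf_root⟩, hf_deg,
    fun i ↦ ⟨P.coeff i, ?_⟩, ?_⟩
  · rw [hf_eval, map_neg, sub_neg_eq_add, sub_add_cancel, coeff_map]
    exact (IsScalarTower.algebraMap_apply F K _ _).symm
  · rw [hf_eval]
    exact neg_mem_Fcal hσ hc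

/-- (Proposition, (iii) ⟹ (iv).)  If there are `α ∈ 𝓕_m(q)` and
`c₁, …, c_{m₁-1} ∈ 𝔽_q` with `α^{m₁} + Σ c_i α^i ∈ 𝓕_{m/m₁}(q)`, then there is a monic
irreducible `f ∈ 𝔽_{q^{m/m₁}}[x]` of degree `m₁` with `f - f(0)` having coefficients
in `𝔽_q` and `f(0) ∈ 𝓕_{m/m₁}(q)`.  Here `𝔽_{q^{m/m₁}}` is realized as the fixed field
of the cyclic group generated by `σ^{m/m₁}` inside the algebraic closure. -/
theorem stmt_15 {F : Type*} [Field F] [Fintype F] (q : ℕ) (hq : Fintype.card F = q)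
    (σ : AlgebraicClosure F ≃ₐ[F] AlgebraicClosure F) (hσ : ∀ x, σ x = x ^ q)
    (m m₁ : ℕ) (hm : 1 < m) (hm₁ : m₁ = m.minFac)
    (α : AlgebraicClosure F) (hα : α ∈ (Fcal q m : Set (AlgebraicClosure F)))
    (c : ℕ → F)
    (hc : α ^ m₁ + ∑ i ∈ Finset.Ico 1 m₁, algebraMap F (AlgebraicClosure F) (c i) * α ^ i ∈
      (Fcal q (m / m₁) : Set (AlgebraicClosure F))) :
    ∃ f : Polynomial
        (IntermediateField.fixedField (Subgroup.zpowers (σ ^ (m / m₁)))),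
      f.Monic ∧ Irreducible f ∧ f.natDegree = m₁ ∧
      (∀ i : ℕ, ∃ a : F,
        (((f - Polynomial.C (f.eval 0)).coeff i : _) : AlgebraicClosure F) =
          algebraMap F (AlgebraicClosure F) a) ∧
      ((f.eval 0 : _) : AlgebraicClosure F) ∈
        (Fcal q (m / m₁) : Set (AlgebraicClosure F)) :=
  stmt_15_general q σ hσ m m₁ hm hm₁ α hα c hc
end

section
/- Let q be a prime power, let m, n > 1 be relatively prime integers, let m₁ be the smallest prime divisor of m and n₁ the smallest prime divisor of n. Suppose there exists a monic irreducible polynomial f(x) ∈ F_{q^{m/m₁}}[x] of degree m₁ such that f(x) − f(0) has all its coefficients in F_q and f(0) ∈ 𝓕_{m/m₁}(q). Then there exist a polynomial φ(x,y) ∈ F_q[x,y] with deg_x φ = m₁ and 0 < deg_y φ < n₁, an integer k, an element α ∈ 𝓕_m(q) with σ^k(α) ≠ α, and an element β ∈ 𝓕_n(q), such that φ(σ^k(α), β) = φ(α, β). -/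
open Polynomial

/-!
Put `s = m / m₁`, `K = 𝔽_{q^s}`, let `α` be a root of `f` and write `f = g + f(0)` with
`g ∈ 𝔽_q[x]`. Then `f(0) = -g(α) ∈ 𝔽_q(α)` has degree `s`, so `s` divides `d = [𝔽_q(α) : 𝔽_q]`;
`d` divides `[K(α) : 𝔽_q] = s m₁ = m`; and `d ≠ s`, for otherwise `α ∈ K` and `f` would not be
irreducible of degree `m₁ ≥ 2`. Since `m₁` is prime, `d = m`. Take `φ(x, y) = g(x) + y` and
`k = s`: `g(σ^s α) = σ^s(g(α)) = σ^s(-f(0)) = -f(0) = g(α)`, while `σ^s α ≠ α` because `s < m`.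
All degrees are read off from the Frobenius: `x ^ q ^ l = x` iff `[𝔽_q(x) : 𝔽_q] ∣ l`, since the
Frobenius of a finite field has order equal to its degree.
-/

open IntermediateField Module FiniteField

theorem Nat.eq_mul_of_dvd_of_dvd_mul_prime {s d p : ℕ} (hp : p.Prime) (hsd : s ∣ d)
    (hds : d ∣ s * p) (hne : d ≠ s) : d = s * p := by
  obtain ⟨e, rfl⟩ := hsd
  have hs : s ≠ 0 := by rintro rfl; simp at hne
  rcases hp.eq_one_or_self_of_dvd e (Nat.dvd_of_mul_dvd_mul_left (Nat.pos_of_ne_zero hs) hds)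
    with rfl | rfl
  · simp at hne
  · rfl

section FiniteFieldDegree

variable {F : Type*} [Field F] [Fintype F]

theorem finrank_dvd_iff_forall_pow_card_pow_eq_self {E : Type*} [Field E] [Finite E]
    [Algebra F E] {l : ℕ} :
    finrank F E ∣ l ↔ ∀ y : E, y ^ Fintype.card F ^ l = y := by
  rw [← orderOf_frobeniusAlgHom F E, orderOf_dvd_iff_pow_eq_one, AlgHom.ext_iff]
  simp [AlgHom.coe_pow, coe_frobeniusAlgHom, pow_iterate]

variable {L : Type*} [Field L] [Algebra F L]

theorem pow_card_pow_eq_self_iff_finrank_dvd {x : L} (hx : IsIntegral F x) {l : ℕ} :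
    x ^ Fintype.card F ^ l = x ↔ finrank F F⟮x⟯ ∣ l := by
  have : FiniteDimensional F F⟮x⟯ := adjoin.finiteDimensional hx
  have : Finite F⟮x⟯ := Module.finite_of_finite F
  rw [finrank_dvd_iff_forall_pow_card_pow_eq_self]
  refine ⟨fun h => ?_, fun h => congrArg Subtype.val (h (AdjoinSimple.gen F x))⟩
  -- an `F`-algebra endomorphism of `F⟮x⟯` is determined by its value at `x`
  have hfrob : frobeniusAlgHom F F⟮x⟯ ^ l = 1 := by
    refine adjoin_algHom_ext F fun y hy => Subtype.ext ?_
    rw [Set.mem_singleton_iff] at hy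
    subst hy
    simpa [AlgHom.coe_pow, coe_frobeniusAlgHom, pow_iterate] using h
  intro y
  simpa [AlgHom.coe_pow, coe_frobeniusAlgHom, pow_iterate] using congr($hfrob y)

theorem mem_Fcal_iff_finrank_eq {x : L} (hx : IsIntegral F x) (r : ℕ) :
    x ∈ (Fcal (Fintype.card F) r : Set L) ↔ finrank F F⟮x⟯ = r := by
  have : FiniteDimensional F F⟮x⟯ := adjoin.finiteDimensional hx
  simp only [Fcal, Set.mem_ofPred_eq, pow_card_pow_eq_self_iff_finrank_dvd hx]
  refine ⟨fun ⟨hdr, hrd⟩ => Nat.dvd_antisymm hdr (hrd _ finrank_pos dvd_rfl), ?_⟩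
  rintro rfl
  exact ⟨dvd_rfl, fun _ _ => id⟩

variable (F L) in
theorem exists_finrank_adjoin_eq [IsAlgClosed L] {n : ℕ} (hn : n ≠ 0) :
    ∃ β : L, finrank F F⟮β⟯ = n := by
  obtain ⟨p, _⟩ := CharP.exists F
  have : Fact p.Prime := ⟨CharP.char_is_prime F p⟩
  have : NeZero n := ⟨hn⟩
  obtain ⟨γ, hγ⟩ := Field.exists_primitive_element_of_finite_bot F (Extension F p n)
  let ι : Extension F p n →ₐ[F] L := IsAlgClosed.lift
  refine ⟨ι γ, ?_⟩
  rw [adjoin.finrank ((Algebra.IsIntegral.isIntegral γ).map ι), minpoly.algHom_eq ι ι.injective,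
    (Field.primitive_element_iff_minpoly_natDegree_eq F γ).mp hγ, finrank_extension]

end FiniteFieldDegree

theorem IntermediateField.mem_fixedField_zpowers_iff {K L : Type*} [Field K] [Field L]
    [Algebra K L] (τ : L ≃ₐ[K] L) (x : L) :
    x ∈ fixedField (Subgroup.zpowers τ) ↔ τ x = x := by
  rw [mem_fixedField_iff, Subgroup.forall_mem_zpowers]
  exact MulAction.mem_fixedBy_zpowers_iff_mem_fixedBy (α := L) (g := τ)

section Frobenius

variable {F L : Type*} [Field F] [Fintype F] [Field L] [Algebra F L] {σ : L ≃ₐ[F] L}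

theorem pow_apply_eq_pow_card_pow (hσ : ∀ x, σ x = x ^ Fintype.card F) (s : ℕ) (x : L) :
    (σ ^ s) x = x ^ Fintype.card F ^ s := by
  induction s with
  | zero => simp
  | succ s ih => rw [pow_succ', AlgEquiv.mul_apply, ih, hσ, ← pow_mul, pow_succ]

theorem pow_apply_eq_self_iff_finrank_dvd (hσ : ∀ x, σ x = x ^ Fintype.card F) {x : L}
    (hx : IsIntegral F x) (s : ℕ) : (σ ^ s) x = x ↔ finrank F F⟮x⟯ ∣ s := by
  rw [pow_apply_eq_pow_card_pow hσ, pow_card_pow_eq_self_iff_finrank_dvd hx]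

theorem mem_fixedField_zpowers_pow_iff (hσ : ∀ x, σ x = x ^ Fintype.card F) (s : ℕ) (x : L) :
    x ∈ fixedField (Subgroup.zpowers (σ ^ s)) ↔ x ^ Fintype.card F ^ s = x := by
  rw [mem_fixedField_zpowers_iff, pow_apply_eq_pow_card_pow hσ]

theorem finite_fixedField_zpowers_pow (hσ : ∀ x, σ x = x ^ Fintype.card F) {s : ℕ}
    (hs : s ≠ 0) : Finite (fixedField (Subgroup.zpowers (σ ^ s))) := by
  refine Set.Finite.to_subtype <| (finite_setOfPred_isRoot
    (X_pow_card_pow_sub_X_ne_zero (K' := L) hs (Fintype.one_lt_card (α := F)))).subset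
    fun x hx => ?_
  simp [sub_eq_zero, (mem_fixedField_zpowers_pow_iff hσ s x).mp hx]

theorem finrank_fixedField_zpowers_pow [IsAlgClosed L] [Algebra.IsAlgebraic F L]
    (hσ : ∀ x, σ x = x ^ Fintype.card F) {s : ℕ} (hs : s ≠ 0) :
    finrank F (fixedField (Subgroup.zpowers (σ ^ s))) = s := by
  have := finite_fixedField_zpowers_pow hσ hs
  refine Nat.dvd_antisymm ?_ ?_
  · refine finrank_dvd_iff_forall_pow_card_pow_eq_self.mpr fun y => Subtype.ext ?_
    simpa using (mem_fixedField_zpowers_pow_iff hσ s y).mp y.2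
  · obtain ⟨β, hβ⟩ := exists_finrank_adjoin_eq F L hs
    have hβs : β ^ Fintype.card F ^ s = β :=
      (pow_card_pow_eq_self_iff_finrank_dvd (Algebra.IsIntegral.isIntegral β)).mpr hβ.dvd
    have := finrank_dvd_of_le_right
      (adjoin_simple_le_iff.mpr ((mem_fixedField_zpowers_pow_iff hσ s β).mpr hβs))
    rwa [hβ] at this

theorem finrank_adjoin_eq_mul_of_finrank_adjoin_fixedField_eq_prime [IsAlgClosed L]
    [Algebra.IsAlgebraic F L] (hσ : ∀ x, σ x = x ^ Fintype.card F) {s p : ℕ} (hs : s ≠ 0)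
    (hp : p.Prime) {α : L}
    (hα : finrank (fixedField (Subgroup.zpowers (σ ^ s)))
      (fixedField (Subgroup.zpowers (σ ^ s)))⟮α⟯ = p)
    (hsα : s ∣ finrank F F⟮α⟯) :
    finrank F F⟮α⟯ = s * p := by
  set K := fixedField (Subgroup.zpowers (σ ^ s))
  have := finite_fixedField_zpowers_pow hσ hs
  have := Fintype.ofFinite K
  have hcardK : Fintype.card K = Fintype.card F ^ s := by
    rw [card_eq_pow_finrank (K := F), finrank_fixedField_zpowers_pow hσ hs]
  have hα_fixed : α ^ Fintype.card F ^ (s * p) = α := by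
    have := (pow_card_pow_eq_self_iff_finrank_dvd (Algebra.IsIntegral.isIntegral (R := K) α)
      (l := p)).mpr hα.dvd
    rwa [hcardK, ← pow_mul] at this
  have hαF := Algebra.IsIntegral.isIntegral (R := F) α
  refine Nat.eq_mul_of_dvd_of_dvd_mul_prime hp hsα
    ((pow_card_pow_eq_self_iff_finrank_dvd hαF).mp hα_fixed) fun hd => hp.ne_one ?_
  have hαK : α ∈ K := (mem_fixedField_zpowers_pow_iff hσ s α).mpr
    ((pow_card_pow_eq_self_iff_finrank_dvd hαF).mpr hd.dvd)
  rw [← hα, finrank_adjoin_simple_eq_one_iff, mem_bot]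
  exact ⟨⟨α, hαK⟩, rfl⟩

theorem exists_root_finrank_adjoin_eq_mul [IsAlgClosed L] [Algebra.IsAlgebraic F L]
    (hσ : ∀ x, σ x = x ^ Fintype.card F) {s p : ℕ} (hs : s ≠ 0) (hp : p.Prime)
    {f : (fixedField (Subgroup.zpowers (σ ^ s)))[X]} (hfm : f.Monic) (hfi : Irreducible f)
    (hfd : f.natDegree = p) {g : F[X]} (hg : g.map (algebraMap F _) = f - C (f.eval 0))
    (hf0 : finrank F F⟮((f.eval 0 : _) : L)⟯ = s) :
    ∃ α : L, finrank F F⟮α⟯ = s * p ∧ aeval α g = -((f.eval 0 : _) : L) := by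
  obtain ⟨α, hα⟩ := IsAlgClosed.exists_aeval_eq_zero L f
    (by rw [degree_eq_natDegree hfm.ne_zero, hfd]; exact_mod_cast hp.ne_zero)
  have hgα : aeval α g = -((f.eval 0 : _) : L) := by
    rw [← aeval_map_algebraMap (fixedField (Subgroup.zpowers (σ ^ s))), hg, map_sub, hα,
      aeval_C, zero_sub]
    rfl
  have hf0α : ((f.eval 0 : _) : L) ∈ F⟮α⟯ := by
    rw [← neg_neg ((f.eval 0 : _) : L), ← hgα]
    exact neg_mem (algebra_adjoin_le_adjoin F {α} (aeval_mem_adjoin_singleton F α))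
  refine ⟨α, finrank_adjoin_eq_mul_of_finrank_adjoin_fixedField_eq_prime hσ hs hp ?_
    (hf0 ▸ finrank_dvd_of_le_right (adjoin_simple_le_iff.mpr hf0α)), hgα⟩
  rw [adjoin.finrank ⟨f, hfm, hα⟩, ← minpoly.eq_of_irreducible_of_monic hfi hα hfm, hfd]

end Frobenius

namespace MvPolynomial

variable {R : Type*} [CommSemiring R]

theorem degreeOf_zero_toMvPolynomial_add_X_one (p : R[X]) :
    (p.toMvPolynomial 0 + X 1 : MvPolynomial (Fin 2) R).degreeOf 0 = p.natDegree := by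
  rw [← natDegree_finSuccEquiv, map_add, show (1 : Fin 2) = Fin.succ 0 from rfl,
    finSuccEquiv_X_succ, toMvPolynomial, ← aeval_algHom_apply, finSuccEquiv_X_zero,
    aeval_X_left_eq_map, natDegree_add_C]
  exact natDegree_map_eq_of_injective (C_injective (Fin 1) R) p

theorem degreeOf_one_toMvPolynomial_add_X_one [Nontrivial R] (p : R[X]) :
    (p.toMvPolynomial 0 + X 1 : MvPolynomial (Fin 2) R).degreeOf 1 = 1 := by
  classical
  have hvars : (p.toMvPolynomial 0 : MvPolynomial (Fin 2) R).vars ⊆ {0} := by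
    rw [toMvPolynomial_eq_rename_comp]
    exact (vars_rename _ _).trans
      (Finset.image_subset_iff.mpr fun _ _ => Finset.mem_singleton_self 0)
  rw [add_comm, degreeOf_add_eq_of_degreeOf_lt, degreeOf_X_self]
  rw [degreeOf_X_self, Nat.lt_one_iff, ← not_ne_iff, ← mem_vars_iff_degreeOf_ne_zero]
  exact fun h => absurd (hvars h) (by simp)

end MvPolynomial

theorem stmt_16_general {F : Type*} [Field F] [Fintype F] (q : ℕ) (hq : Fintype.card F = q)
    (σ : AlgebraicClosure F ≃ₐ[F] AlgebraicClosure F) (hσ : ∀ x, σ x = x ^ q)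
    (m n m₁ n₁ : ℕ) (hm : 1 < m) (hn : 1 < n)
    (hm₁ : m₁ = m.minFac) (hn₁ : n₁ = n.minFac)
    (f : Polynomial (IntermediateField.fixedField (Subgroup.zpowers (σ ^ (m / m₁)))))
    (hfm : f.Monic) (hfi : Irreducible f) (hfd : f.natDegree = m₁)
    (hcoeff : ∀ i : ℕ, ∃ a : F,
      (((f - Polynomial.C (f.eval 0)).coeff i : _) : AlgebraicClosure F) =
        algebraMap F (AlgebraicClosure F) a)
    (hf0 : ((f.eval 0 : _) : AlgebraicClosure F) ∈
      (Fcal q (m / m₁) : Set (AlgebraicClosure F))) :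
    ∃ φ : MvPolynomial (Fin 2) F,
      φ.degreeOf 0 = m₁ ∧ 0 < φ.degreeOf 1 ∧ φ.degreeOf 1 < n₁ ∧
      ∃ k : ℤ, ∃ α ∈ (Fcal q m : Set (AlgebraicClosure F)),
        (σ ^ k) α ≠ α ∧
        ∃ β ∈ (Fcal q n : Set (AlgebraicClosure F)),
          MvPolynomial.aeval ![(σ ^ k) α, β] φ = MvPolynomial.aeval ![α, β] φ := by
  subst hq hn₁
  have hp : m₁.Prime := hm₁ ▸ Nat.minFac_prime hm.ne'
  have hsm : m / m₁ * m₁ = m := Nat.div_mul_cancel (hm₁ ▸ Nat.minFac_dvd m)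
  have hs : m / m₁ ≠ 0 := by intro h; rw [h, zero_mul] at hsm; omega
  obtain ⟨g, hg⟩ : ∃ g : F[X],
      g.map (algebraMap F (fixedField (Subgroup.zpowers (σ ^ (m / m₁))))) = f - C (f.eval 0) :=
    mem_lifts _ |>.mp <| (lifts_iff_coeff_lifts _).mpr fun i =>
      let ⟨a, ha⟩ := hcoeff i; ⟨a, Subtype.ext (by simpa using ha.symm)⟩
  have hgd : g.natDegree = m₁ := by
    simpa only [natDegree_map, natDegree_sub_C, hfd] using congrArg natDegree hg
  obtain ⟨α, hαm, hgα⟩ := exists_root_finrank_adjoin_eq_mul hσ hs hp hfm hfi hfd hg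
    ((mem_Fcal_iff_finrank_eq (Algebra.IsIntegral.isIntegral _) _).mp hf0)
  obtain ⟨β, hβ⟩ := exists_finrank_adjoin_eq F (AlgebraicClosure F) (n := n) (by omega)
  refine ⟨g.toMvPolynomial 0 + MvPolynomial.X 1, ?_, ?_, ?_, ((m / m₁ : ℕ) : ℤ), α, ?_, ?_, β,
    (mem_Fcal_iff_finrank_eq (Algebra.IsIntegral.isIntegral β) n).mpr hβ, ?_⟩
  · rw [MvPolynomial.degreeOf_zero_toMvPolynomial_add_X_one, hgd]
  · rw [MvPolynomial.degreeOf_one_toMvPolynomial_add_X_one]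
    exact one_pos
  · rw [MvPolynomial.degreeOf_one_toMvPolynomial_add_X_one]
    exact (Nat.minFac_prime hn.ne').one_lt
  · exact (mem_Fcal_iff_finrank_eq (Algebra.IsIntegral.isIntegral α) m).mpr (hαm.trans hsm)
  · rw [zpow_natCast, Ne, pow_apply_eq_self_iff_finrank_dvd hσ (Algebra.IsIntegral.isIntegral α),
      hαm, hsm]
    exact fun h => (Nat.div_lt_self (by omega) hp.one_lt).not_ge
      (Nat.le_of_dvd (Nat.pos_of_ne_zero hs) h)
  · simp only [map_add, MvPolynomial.aeval_toMvPolynomial, MvPolynomial.aeval_X,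
      Matrix.cons_val_zero, Matrix.cons_val_one, zpow_natCast]
    rw [aeval_algHom_apply, hgα, map_neg, (mem_fixedField_zpowers_iff _ _).mp (f.eval 0).2]

/-- (Proposition, (iv) ⟹ (i).)  If there is a monic irreducible
`f ∈ 𝔽_{q^{m/m₁}}[x]` of degree `m₁` with `f - f(0)` having coefficients in `𝔽_q` and
`f(0) ∈ 𝓕_{m/m₁}(q)`, then there are `φ(x,y) ∈ 𝔽_q[x,y]` with `deg_x φ = m₁`,
`0 < deg_y φ < n₁`, an integer `k`, `α ∈ 𝓕_m(q)` with `σ^k(α) ≠ α`, and `β ∈ 𝓕_n(q)`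
with `φ(σ^k(α), β) = φ(α, β)`.  Here `𝔽_{q^{m/m₁}}` is realized as the fixed field of
the cyclic group generated by `σ^{m/m₁}` inside the algebraic closure. -/
theorem stmt_16 {F : Type*} [Field F] [Fintype F] (q : ℕ) (hq : Fintype.card F = q)
    (σ : AlgebraicClosure F ≃ₐ[F] AlgebraicClosure F) (hσ : ∀ x, σ x = x ^ q)
    (m n m₁ n₁ : ℕ) (hm : 1 < m) (hn : 1 < n) (hmn : Nat.Coprime m n)
    (hm₁ : m₁ = m.minFac) (hn₁ : n₁ = n.minFac)
    (f : Polynomial (IntermediateField.fixedField (Subgroup.zpowers (σ ^ (m / m₁)))))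
    (hfm : f.Monic) (hfi : Irreducible f) (hfd : f.natDegree = m₁)
    (hcoeff : ∀ i : ℕ, ∃ a : F,
      (((f - Polynomial.C (f.eval 0)).coeff i : _) : AlgebraicClosure F) =
        algebraMap F (AlgebraicClosure F) a)
    (hf0 : ((f.eval 0 : _) : AlgebraicClosure F) ∈
      (Fcal q (m / m₁) : Set (AlgebraicClosure F))) :
    ∃ φ : MvPolynomial (Fin 2) F,
      φ.degreeOf 0 = m₁ ∧ 0 < φ.degreeOf 1 ∧ φ.degreeOf 1 < n₁ ∧
      ∃ k : ℤ, ∃ α ∈ (Fcal q m : Set (AlgebraicClosure F)),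
        (σ ^ k) α ≠ α ∧
        ∃ β ∈ (Fcal q n : Set (AlgebraicClosure F)),
          MvPolynomial.aeval ![(σ ^ k) α, β] φ = MvPolynomial.aeval ![α, β] φ :=
  stmt_16_general q hq σ hσ m n m₁ n₁ hm hn hm₁ hn₁ f hfm hfi hfd hcoeff hf0
end

section
/- Let p be a prime and let k be a positive integer. Then there exists a monic irreducible polynomial f(x) ∈ F_{p^k}[x] of degree p such that f(x) − f(0) has all its coefficients in the prime field F_p and f(0) ∈ 𝓕_k(p). (Concretely, f(x) = x^p − x − a for a suitable a ∈ 𝓕_k(p) with absolute trace Tr_{F_{p^k}/F_p}(a) = 1.) -/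
/-!
Take `f = X ^ p - X + b` with `b` a generator of `𝔽_{p^k}` of nonzero absolute trace `t`.
If `β` is a root of an irreducible factor of degree `d` of `f`, iterating `β ^ p = β - b`
gives `β ^ (p ^ k) = β - t` and then `β ^ (p ^ (k * d)) = β - d t`; since `β` lies in a field
with `p ^ (k * d)` elements, `d t = 0`, so `p ∣ d` and `f` is irreducible.
Such a `b` exists by counting: the trace kernel has `p ^ (k - 1)` elements, each proper subfield
`𝔽_{p^d}` has `p ^ d - 1` nonzero elements, and
`p ^ (k - 1) + ∑_{d ∣ k, d < k} (p ^ d - 1) < p ^ k`.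
-/

open Polynomial

open Module Finset

theorem AddMonoidHom.iterate_eq_add_sum {M : Type*} [AddCommMonoid M] (f : M →+ M) {x b : M}
    (h : f x = x + b) (n : ℕ) : f^[n] x = x + ∑ i ∈ Finset.range n, f^[i] b := by
  induction n with
  | zero => simp
  | succ n ih =>
    rw [Function.iterate_succ_apply', ih, map_add, h, map_sum, sum_range_succ', add_assoc]
    simp only [← Function.iterate_succ_apply' f, Function.iterate_zero_apply, add_comm b]

section ExpChar

variable {R : Type*} [CommSemiring R] {p : ℕ} [ExpChar R p]

theorem pow_char_pow_eq_add_sum {x b : R} (h : x ^ p = x + b) (n : ℕ) :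
    x ^ p ^ n = x + ∑ i ∈ range n, b ^ p ^ i := by
  have hφ : ⇑(frobenius R p : R →+ R) = (· ^ p) := rfl
  simpa only [hφ, pow_iterate] using (frobenius R p : R →+ R).iterate_eq_add_sum h n

theorem pow_char_pow_mul_eq_add_nsmul {x c : R} {k : ℕ} (h : x ^ p ^ k = x + c)
    (hc : c ^ p ^ k = c) (n : ℕ) : x ^ p ^ (k * n) = x + n • c := by
  set φ : R →+ R := (iterateFrobenius R p k).toAddMonoidHom
  have hφ : ⇑φ = (· ^ p ^ k) := rfl
  have := φ.iterate_eq_add_sum h n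
  rw [sum_congr rfl fun i _ => Function.iterate_fixed (f := φ) hc i] at this
  simpa only [hφ, pow_iterate, ← pow_mul, sum_const, card_range] using this

end ExpChar

theorem natDegree_X_pow_sub_X_sub_C {K : Type*} [Field K] {p : ℕ} (hp : 1 < p) (a : K) :
    (X ^ p - X - C a : K[X]).natDegree = p := by
  rw [natDegree_sub_C, natDegree_sub_eq_left_of_natDegree_lt] <;> simp [hp]

theorem monic_X_pow_sub_X_sub_C {K : Type*} [Field K] {p : ℕ} (hp : 1 < p) (a : K) :
    (X ^ p - X - C a : K[X]).Monic := by
  rw [sub_sub]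
  exact monic_X_pow_sub (by rw [degree_X_add_C]; exact_mod_cast hp)

section ArtinSchreier

variable {K : Type*} [Field K] [Finite K] {p : ℕ} [Fact p.Prime] [Algebra (ZMod p) K]

theorem dvd_natDegree_of_dvd_X_pow_sub_X_sub_C {a : K} (ha : Algebra.trace (ZMod p) K a ≠ 0)
    {g : K[X]} (hg : Irreducible g) (hgf : g ∣ X ^ p - X - C a) : p ∣ g.natDegree := by
  have := Fact.mk hg
  set L := AdjoinRoot g
  set β := AdjoinRoot.root g
  set t := Algebra.trace (ZMod p) K a
  have : CharP L p := charP_of_injective_algebraMap (algebraMap (ZMod p) L).injective p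
  have : Module.Finite K L := (AdjoinRoot.powerBasis hg.ne_zero).finite
  have : Module.Finite (ZMod p) L := Module.Finite.trans K L
  have : Finite L := Module.finite_of_finite (ZMod p)
  let : Fintype L := Fintype.ofFinite L
  have hβ : β ^ p = β + algebraMap K L a := by
    have hroot := AdjoinRoot.mk_eq_zero.2 hgf
    rw [← AdjoinRoot.aeval_eq] at hroot
    simp only [map_sub, map_pow, aeval_X, aeval_C] at hroot
    linear_combination hroot
  have hβk : β ^ p ^ finrank (ZMod p) K = β + algebraMap (ZMod p) L t := by
    rw [pow_char_pow_eq_add_sum hβ, IsScalarTower.algebraMap_apply (ZMod p) K L,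
      FiniteField.algebraMap_trace_eq_sum_pow, Nat.card_zmod, map_sum]
    simp only [map_pow]
  have hcard : Fintype.card L = p ^ (finrank (ZMod p) K * g.natDegree) := by
    rw [card_eq_pow_finrank (K := ZMod p), ZMod.card, ← finrank_mul_finrank (ZMod p) K L,
      (AdjoinRoot.powerBasis hg.ne_zero).finrank, AdjoinRoot.powerBasis_dim]
  have hfix := pow_char_pow_mul_eq_add_nsmul hβk (by rw [← map_pow, ZMod.pow_card_pow])
    g.natDegree
  rw [← hcard, FiniteField.pow_card, left_eq_add, ← map_nsmul,
    map_eq_zero_iff _ (algebraMap (ZMod p) L).injective, nsmul_eq_mul, mul_eq_zero,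
    ZMod.natCast_eq_zero_iff] at hfix
  exact hfix.resolve_right ha

theorem irreducible_X_pow_sub_X_sub_C {a : K} (ha : Algebra.trace (ZMod p) K a ≠ 0) :
    Irreducible (X ^ p - X - C a) := by
  have hp : 1 < p := (Fact.out : p.Prime).one_lt
  have hdeg := natDegree_X_pow_sub_X_sub_C hp a
  have hf0 : X ^ p - X - C a ≠ 0 := (monic_X_pow_sub_X_sub_C hp a).ne_zero
  obtain ⟨g, hg, hgf⟩ := WfDvdMonoid.exists_irreducible_factor
    (fun hu => by have := natDegree_eq_zero_of_isUnit hu; omega) hf0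
  have hpg : p ≤ g.natDegree :=
    Nat.le_of_dvd hg.natDegree_pos (dvd_natDegree_of_dvd_X_pow_sub_X_sub_C ha hg hgf)
  exact (associated_of_dvd_of_natDegree_le hgf hf0 (by rw [hdeg]; exact hpg)).irreducible hg

end ArtinSchreier

theorem Nat.two_mul_le_of_mem_properDivisors {d k : ℕ} (hd : d ∈ k.properDivisors) :
    2 * d ≤ k := by
  obtain ⟨⟨c, rfl⟩, hlt⟩ := Nat.mem_properDivisors.1 hd
  have : 1 < c := by
    by_contra! hc
    interval_cases c <;> simp at hlt
  nlinarith

theorem pow_pred_add_sum_properDivisors_lt {p k : ℕ} (hp : 2 ≤ p) (hk : 0 < k) :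
    p ^ (k - 1) + ∑ d ∈ k.properDivisors, (p ^ d - 1) < p ^ k := by
  obtain rfl | rfl | hk3 : k = 1 ∨ k = 2 ∨ 3 ≤ k := by omega
  · simp only [Nat.properDivisors_one, sum_empty, Nat.sub_self, pow_zero, pow_one]
    omega
  · rw [Nat.prime_two.properDivisors, sum_singleton, Nat.add_one_sub_one, pow_one, sq]
    have := Nat.mul_le_mul_right p hp
    omega
  · have hsum : ∑ d ∈ k.properDivisors, p ^ d < p ^ (k - 1) :=
      Nat.geomSum_lt hp fun d hd => by have := Nat.two_mul_le_of_mem_properDivisors hd; omega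
    have hpow : p ^ k = p * p ^ (k - 1) := by rw [← pow_succ']; congr 1; omega
    have := sum_le_sum fun d (_ : d ∈ k.properDivisors) => Nat.sub_le (p ^ d) 1
    have := Nat.mul_le_mul_right (p ^ (k - 1)) hp
    omega

theorem mem_Fcal_of_forall_properDivisors {M : Type*} [Monoid M] {p k : ℕ} {b : M}
    (hk : 0 < k) (hb : b ^ p ^ k = b) (hd : ∀ d ∈ k.properDivisors, b ^ p ^ d ≠ b) :
    b ∈ Fcal p k := by
  refine ⟨hb, fun l hl hbl => ?_⟩
  have hper : ∀ n, b ^ p ^ n = b → Function.IsPeriodicPt (· ^ p) n b := fun n h => by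
    simpa [Function.IsPeriodicPt, Function.IsFixedPt, pow_iterate] using h
  have hgcd := (hper l hbl).gcd (hper k hb)
  simp only [Function.IsPeriodicPt, Function.IsFixedPt, pow_iterate] at hgcd
  by_contra hkl
  refine hd (l.gcd k) (Nat.mem_properDivisors.2 ⟨Nat.gcd_dvd_right l k, ?_⟩) hgcd
  exact lt_of_le_of_ne (Nat.le_of_dvd hk (Nat.gcd_dvd_right l k))
    fun h => hkl (h ▸ Nat.gcd_dvd_left l k)

theorem card_nthRootsFinset_le {R : Type*} [CommRing R] [IsDomain R] (n : ℕ) (a : R) :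
    #(nthRootsFinset n a) ≤ n := by
  classical
  rw [nthRootsFinset_def]
  exact (Multiset.toFinset_card_le _).trans (card_nthRoots n a)

section Counting

variable {K : Type*} [Field K] [Fintype K] {p : ℕ} [Fact p.Prime] [Algebra (ZMod p) K]

theorem card_filter_trace_eq_zero [DecidableEq K] :
    #{x : K | Algebra.trace (ZMod p) K x = 0} = p ^ (finrank (ZMod p) K - 1) := by
  set T := Algebra.trace (ZMod p) K
  have hrange : finrank (ZMod p) (LinearMap.range T) = 1 := by
    rw [LinearMap.range_eq_top.2 (Algebra.trace_surjective (ZMod p) K), finrank_top,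
      finrank_self]
  have hker := T.finrank_range_add_finrank_ker
  rw [← Fintype.card_subtype, ← Nat.card_eq_fintype_card]
  change Nat.card (LinearMap.ker T) = _
  rw [natCard_eq_pow_finrank (K := ZMod p), Nat.card_zmod]
  congr 1
  omega

variable (K p) in
theorem exists_mem_Fcal_trace_ne_zero :
    ∃ b : K, b ∈ Fcal p (finrank (ZMod p) K) ∧ Algebra.trace (ZMod p) K b ≠ 0 := by
  classical
  have hp : p.Prime := Fact.out
  set k := finrank (ZMod p) K
  have hk : 0 < k := finrank_pos
  have hcard : Fintype.card K = p ^ k := by rw [card_eq_pow_finrank (K := ZMod p), ZMod.card]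
  -- a nonzero element of `𝔽_{p^d}` is a root of unity of order dividing `p ^ d - 1`
  set bad : Finset K := ({x | Algebra.trace (ZMod p) K x = 0} : Finset K) ∪
    k.properDivisors.biUnion fun d => nthRootsFinset (p ^ d - 1) (1 : K)
  have hbad : #bad < #(univ : Finset K) := calc
    #bad ≤ p ^ (k - 1) + ∑ d ∈ k.properDivisors, (p ^ d - 1) :=
      card_union_le _ _ |>.trans <| add_le_add card_filter_trace_eq_zero.le <|
        card_biUnion_le.trans <| sum_le_sum fun d _ => card_nthRootsFinset_le _ _
    _ < #(univ : Finset K) :=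
      card_univ (α := K) ▸ hcard ▸ pow_pred_add_sum_properDivisors_lt hp.two_le hk
  obtain ⟨b, -, hb⟩ := exists_mem_notMem_of_card_lt_card hbad
  simp only [bad, mem_union, mem_filter, mem_univ, true_and, mem_biUnion, not_or,
    not_exists, not_and] at hb
  obtain ⟨htr, hroots⟩ := hb
  have hb0 : b ≠ 0 := by rintro rfl; exact htr (map_zero _)
  refine ⟨b, mem_Fcal_of_forall_properDivisors hk (hcard ▸ FiniteField.pow_card b)
    fun d hd hbd => hroots d hd ?_, htr⟩
  have hpd : p ^ d ≠ 0 := pow_ne_zero _ hp.ne_zero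
  have hd0 : 0 < p ^ d - 1 :=
    Nat.sub_pos_of_lt (Nat.one_lt_pow (Nat.pos_of_mem_properDivisors hd).ne' hp.one_lt)
  rw [mem_nthRootsFinset hd0]
  exact mul_right_cancel₀ hb0 (by rw [pow_sub_one_mul hpd, hbd, one_mul])

end Counting

/-- For every prime `p` and positive integer `k` there is a monic irreducible
polynomial `f ∈ 𝔽_{p^k}[x]` of degree `p` such that `f - f(0)` has all its
coefficients in the prime field `𝔽_p` and `f(0) ∈ 𝓕_k(p)`. -/
theorem stmt_17 (p : ℕ) [hp : Fact p.Prime] (k : ℕ) (hk : 0 < k) :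
    ∃ f : Polynomial (GaloisField p k),
      f.Monic ∧ Irreducible f ∧ f.natDegree = p ∧
      (∀ i : ℕ, ∃ a : ZMod p,
        (f - Polynomial.C (f.eval 0)).coeff i = algebraMap (ZMod p) (GaloisField p k) a) ∧
      f.eval 0 ∈ (Fcal p k : Set (GaloisField p k)) := by
  let : Fintype (GaloisField p k) := Fintype.ofFinite _
  obtain ⟨b, hbF, hbT⟩ := exists_mem_Fcal_trace_ne_zero (GaloisField p k) p
  rw [GaloisField.finrank p hk.ne'] at hbF
  have hp1 : 1 < p := hp.out.one_lt
  have heval : (X ^ p - X - C (-b) : (GaloisField p k)[X]).eval 0 = b := by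
    simp [zero_pow hp.out.ne_zero]
  refine ⟨X ^ p - X - C (-b), monic_X_pow_sub_X_sub_C hp1 _,
    irreducible_X_pow_sub_X_sub_C (by rwa [map_neg, neg_ne_zero]),
    natDegree_X_pow_sub_X_sub_C hp1 _, fun i => ⟨(X ^ p - X : (ZMod p)[X]).coeff i, ?_⟩,
    by rwa [heval]⟩
  rw [heval, ← coeff_map]
  simp
end
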